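/- arXiv:2006.11794 — 7 statements merged into one kernel-verified Lean document; each statement's English description precedes it below -/
import Mathlib

section
/- The number of partitions of n having diagonal lengths equal to the single-block Hilbert function T = (1,2,...,d,t,0) (with 0 < t ≤ d) is binom(s+t, t), where s = d+1-t. -/
/-!
A partition has diagonal lengths `(1, 2, …, d, t, 0)` exactly when its Ferrers diagram contains
the staircase `(d, d-1, …, 1)` and is contained in the staircase `(d+1, d, …, 1)`; such a diagram
is the smaller staircase together with some of its `d + 1` outer corners, and the number of
corners added is the length of the `d`-th diagonal. So the partitions are counted by the
`t`-element subsets of a `(d+1)`-element set.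
-/

/-- The diagonal lengths of a partition given by its (antitone) sequence of parts
`f 0 ≥ f 1 ≥ ⋯` : `diagLen f i = #{u | 1 ≤ u ≤ i+1 ∧ i+2-u ≤ p_u}`, with `p_u = f (u-1)`. -/
def diagLen (f : ℕ → ℕ) (i : ℕ) : ℕ :=
  ((Finset.range (i + 1)).filter fun b => i + 1 - b ≤ f b).card

open Finset

/-- `f` lies between the staircases `(d, d-1, …, 1)` and `(d+1, d, …, 1)`; truncated subtraction
makes both bounds `0` past the staircases. -/
def BetweenStaircases (d : ℕ) (f : ℕ → ℕ) : Prop :=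
  ∀ b, d - b ≤ f b ∧ f b ≤ d + 1 - b

/-- The staircase `(d, d-1, …, 1)` with the outer corners in the rows `S` added. -/
def addCorners (d : ℕ) (S : Finset ℕ) (b : ℕ) : ℕ :=
  if b ∈ S then d + 1 - b else d - b

section DiagLen

variable {f : ℕ → ℕ} {d : ℕ}

theorem diagLen_eq_succ_iff {i : ℕ} : diagLen f i = i + 1 ↔ ∀ b ≤ i, i + 1 - b ≤ f b := by
  have := card_filter_eq_iff (s := range (i + 1)) (p := fun b => i + 1 - b ≤ f b)
  rw [card_range] at this
  rw [diagLen, this]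
  simp only [mem_range, Nat.lt_succ_iff]

theorem diagLen_eq_zero_iff {i : ℕ} : diagLen f i = 0 ↔ ∀ b ≤ i, f b ≤ i - b := by
  rw [diagLen, card_filter_eq_zero_iff]
  simp only [mem_range, Nat.lt_succ_iff, not_le]
  exact forall₂_congr fun b hb => by omega

theorem forall_lt_diagLen_eq_succ_iff :
    (∀ i < d, diagLen f i = i + 1) ↔ ∀ b, d - b ≤ f b := by
  simp only [diagLen_eq_succ_iff]
  refine ⟨fun h b => ?_, fun h i hi b hb => (h b).trans' (by omega)⟩
  rcases lt_or_ge b d with hb | hb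
  · have := h (d - 1) (by omega) b (by omega)
    omega
  · omega

theorem forall_gt_diagLen_eq_zero_iff :
    (∀ i > d, diagLen f i = 0) ↔ ∀ b, f b ≤ d + 1 - b := by
  simp only [diagLen_eq_zero_iff]
  refine ⟨fun h b => ?_, fun h i hi b hb => (h b).trans (by omega)⟩
  have := h (max b (d + 1)) (by omega) b (by omega)
  omega

end DiagLen

theorem BetweenStaircases.antitone {d : ℕ} {f : ℕ → ℕ} (h : BetweenStaircases d f) :
    Antitone f :=
  antitone_nat_of_succ_le fun b => by
    have := h b
    have := h (b + 1)
    omega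

theorem antitone_and_diagLen_eq_singleBlock_iff {d t : ℕ} {f : ℕ → ℕ} :
    (Antitone f ∧ ∀ i, diagLen f i = if i < d then i + 1 else if i = d then t else 0) ↔
      BetweenStaircases d f ∧ diagLen f d = t := by
  constructor
  · rintro ⟨-, h⟩
    have hlt := (forall_lt_diagLen_eq_succ_iff (f := f) (d := d)).mp fun i hi => by
      simpa [hi] using h i
    have hgt := (forall_gt_diagLen_eq_zero_iff (f := f) (d := d)).mp fun i hi => by
      simpa [show ¬i < d by omega, hi.ne'] using h i
    exact ⟨fun b => ⟨hlt b, hgt b⟩, by simpa using h d⟩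
  · rintro ⟨hf, hd⟩
    have hlt := (forall_lt_diagLen_eq_succ_iff (f := f) (d := d)).mpr fun b => (hf b).1
    have hgt := (forall_gt_diagLen_eq_zero_iff (f := f) (d := d)).mpr fun b => (hf b).2
    refine ⟨hf.antitone, fun i => ?_⟩
    rcases lt_trichotomy i d with hi | rfl | hi
    · simp [hi, hlt i hi]
    · simp [hd]
    · simp [hgt i hi, show ¬i < d by omega, hi.ne']

theorem betweenStaircases_addCorners {d : ℕ} {S : Finset ℕ} :
    BetweenStaircases d (addCorners d S) := by
  intro b
  unfold addCorners
  split_ifs <;> omega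

theorem filter_addCorners {d : ℕ} {S : Finset ℕ} (hS : S ⊆ range (d + 1)) :
    (range (d + 1)).filter (fun b => d + 1 - b ≤ addCorners d S b) = S := by
  ext b
  have := fun h : b ∈ S => mem_range.mp (hS h)
  rw [mem_filter, mem_range]
  unfold addCorners
  split_ifs <;> grind

/-- Reading off the added corners from the cells on the `d`-th diagonal. -/
def betweenStaircasesEquiv (d : ℕ) :
    {f // BetweenStaircases d f} ≃ {S : Finset ℕ // S ⊆ range (d + 1)} where
  toFun f := ⟨(range (d + 1)).filter fun b => d + 1 - b ≤ f.1 b, filter_subset _ _⟩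
  invFun S := ⟨addCorners d S, betweenStaircases_addCorners⟩
  left_inv f := by
    ext b
    have := f.2 b
    simp only [addCorners, mem_filter, mem_range]
    split_ifs <;> omega
  right_inv S := Subtype.ext (filter_addCorners S.2)

theorem card_singleBlock_diagLen (d t : ℕ) :
    Nat.card {f : ℕ → ℕ // Antitone f ∧
        ∀ i, diagLen f i = if i < d then i + 1 else if i = d then t else 0} =
      (d + 1).choose t :=
  calc _ = Nat.card {f : {f // BetweenStaircases d f} // diagLen f.1 d = t} :=
        Nat.card_congr <| (Equiv.subtypeEquivRight fun _ =>
          antitone_and_diagLen_eq_singleBlock_iff).trans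
            (Equiv.subtypeSubtypeEquivSubtypeInter _ _).symm
    _ = Nat.card {S : {S : Finset ℕ // S ⊆ range (d + 1)} // #S.1 = t} :=
        Nat.card_congr <| (betweenStaircasesEquiv d).subtypeEquiv fun _ => Iff.rfl
    _ = Nat.card (powersetCard t (range (d + 1))) :=
        Nat.card_congr <| (Equiv.subtypeSubtypeEquivSubtypeInter _ _).trans
          (Equiv.subtypeEquivRight fun _ => mem_powersetCard.symm)
    _ = (d + 1).choose t := by
        rw [Nat.card_eq_fintype_card, Fintype.card_coe, card_powersetCard, card_range]

theorem numPartitions_singleBlock_diagonal_lengths_general (d t : ℕ) (htd : t ≤ d) :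
    Nat.card {f : ℕ → ℕ // Antitone f ∧
        ∀ i, diagLen f i = if i < d then i + 1 else if i = d then t else 0} =
      Nat.choose ((d + 1 - t) + t) t := by
  rw [Nat.sub_add_cancel (by omega), card_singleBlock_diagLen]

/-- The number of partitions having diagonal lengths the single-block Hilbert function
`T = (1,2,…,d,t,0)` (with `0 < t ≤ d`) is `(s+t).choose t` where `s = d+1-t`. -/
theorem numPartitions_singleBlock_diagonal_lengths (d t : ℕ) (ht : 0 < t) (htd : t ≤ d) :
    Nat.card {f : ℕ → ℕ // Antitone f ∧
        ∀ i, diagLen f i = if i < d then i + 1 else if i = d then t else 0} =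
      Nat.choose ((d + 1 - t) + t) t :=
  numPartitions_singleBlock_diagonal_lengths_general d t htd
end

section
/- Let T = (1,...,d,t,0) be a single-block Hilbert function, s = d+1-t, δ = max{t+1-s, 0}, and let k be an integer with s+δ < k ≤ s+t. Then the number of partitions P of diagonal lengths T with κ(P) ≥ k equals binom(s+t, k). -/
/-- The invariant `κ(P)` for a partition `P` (given via its hook code) lying in a `t × s` box,
with parts `f 0 ≥ f 1 ≥ ⋯ ≥ f (t-1)`:
`κ(P) = s + max{t+1-s, 0, τ_1, …, τ_n}`, where for a hook code
`(h_1^{l_1},…,h_n^{l_n})` one has `τ_k = (l_k + ⋯ + l_n) - h_k`; in terms of the parts,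
`τ` at the part `f j` is `#{i | f i ≤ f j} - f j`. -/
def boxKappa (s t : ℕ) (f : Fin t → ℕ) : ℤ :=
  s + Finset.fold max (max ((t : ℤ) + 1 - s) 0)
    (fun j => ((Finset.univ.filter fun i => f i ≤ f j).card : ℤ) - f j) Finset.univ

open Finset

/-!
Since `k > s + δ`, the terms `t + 1 - s` and `0` in the maximum defining `κ` stay below
`m := k - s`, so `κ(P) ≥ k` means that `τ ≥ m` at some part. For antitone `f`, the count
`#{i | f i ≤ f j}` is `t - i` for the first index `i` with `f i = f j`, so this says
`f j + j + m ≤ t` for some `j`: the lattice path of `P` in the `t × s` box meets a fixed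
antidiagonal. Such paths are counted by `(s + t).choose (s + m)` (reflection principle); here this
count, like the count `(s + t).choose t` of all paths, follows from Pascal's rule by splitting on
whether the last part of `f` is zero (drop it) or not (subtract one from every part).
-/

theorem Nat.card_subtype_eq_card_and_add_card_and_not {α : Type*} (Q p : α → Prop)
    [Finite {x // Q x}] :
    Nat.card {x // Q x} = Nat.card {x // Q x ∧ p x} + Nat.card {x // Q x ∧ ¬ p x} := by
  classical
  rw [Nat.card_congr (Equiv.sumCompl fun x : {x // Q x} => p x.1).symm, Nat.card_sum,
    Nat.card_congr (Equiv.subtypeSubtypeEquivSubtypeInter Q p),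
    Nat.card_congr (Equiv.subtypeSubtypeEquivSubtypeInter Q fun x => ¬ p x)]

def Fin.snocEquivOfLastEq {α : Type*} {n : ℕ} (Q : (Fin (n + 1) → α) → Prop) (a : α) :
    {f // Q f ∧ f (Fin.last n) = a} ≃ {g : Fin n → α // Q (Fin.snoc g a)} where
  toFun f := ⟨Fin.init f.1, by simpa only [← f.2.2, Fin.snoc_init_self] using f.2.1⟩
  invFun g := ⟨Fin.snoc g.1 a, g.2, Fin.snoc_last _ _⟩
  left_inv f := Subtype.ext <| by simp only [← f.2.2, Fin.snoc_init_self]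
  right_inv g := Subtype.ext <| by simp

def succEquivOfNeZero {ι : Type*} (Q : (ι → ℕ) → Prop) :
    {f // Q f ∧ ∀ i, f i ≠ 0} ≃ {g : ι → ℕ // Q (g + 1)} where
  toFun f := ⟨f.1 - 1, by
    convert f.2.1
    ext i
    exact Nat.sub_add_cancel (Nat.one_le_iff_ne_zero.mpr (f.2.2 i))⟩
  invFun g := ⟨g.1 + 1, g.2, fun i => Nat.succ_ne_zero _⟩
  left_inv f := Subtype.ext <| funext fun i =>
    Nat.sub_add_cancel (Nat.one_le_iff_ne_zero.mpr (f.2.2 i))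
  right_inv g := Subtype.ext <| funext fun i => Nat.add_sub_cancel _ _

theorem Antitone.forall_ne_zero_iff_last_ne_zero {t : ℕ} {f : Fin (t + 1) → ℕ}
    (hf : Antitone f) :
    (∀ i, f i ≠ 0) ↔ f (Fin.last t) ≠ 0 :=
  ⟨fun h => h _, fun h i => Nat.pos_iff_ne_zero.mp <|
    (Nat.pos_iff_ne_zero.mpr h).trans_le (hf (Fin.le_last i))⟩

def InBox (s t : ℕ) (f : Fin t → ℕ) : Prop := Antitone f ∧ ∀ i, f i ≤ s

section InBox

variable {s t : ℕ}

theorem finite_inBox_and (P : (Fin t → ℕ) → Prop) : Finite {f // InBox s t f ∧ P f} :=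
  Finite.of_injective (fun f i => (⟨f.1 i, Nat.lt_succ_of_le (f.2.1.2 i)⟩ : Fin (s + 1)))
    fun _ _ h => Subtype.ext <| funext fun i => congrArg Fin.val (congrFun h i)

theorem inBox_snoc_zero_iff {g : Fin t → ℕ} : InBox s (t + 1) (Fin.snoc g 0) ↔ InBox s t g := by
  simp only [InBox, Fin.forall_fin_succ', Fin.snoc_castSucc, Fin.snoc_last, zero_le, and_true]
  refine and_congr_left' ⟨fun h i j hij => ?_, fun h i j hij => ?_⟩
  · simpa using h (Fin.castSucc_le_castSucc_iff.mpr hij)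
  · induction j using Fin.lastCases with
    | last => simp
    | cast j =>
      induction i using Fin.lastCases with
      | last => exact absurd hij (Fin.castSucc_lt_last j).not_ge
      | cast i => simpa using h (Fin.castSucc_le_castSucc_iff.mp hij)

theorem inBox_add_one_iff {g : Fin t → ℕ} : InBox (s + 1) t (g + 1) ↔ InBox s t g := by
  simp [InBox, Antitone]

theorem card_inBox_succ_succ_and (P : (Fin (t + 1) → ℕ) → Prop) :
    Nat.card {f // InBox (s + 1) (t + 1) f ∧ P f} =
      Nat.card {g : Fin t → ℕ // InBox (s + 1) t g ∧ P (Fin.snoc g 0)} +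
        Nat.card {g : Fin (t + 1) → ℕ // InBox s (t + 1) g ∧ P (g + 1)} := by
  have := finite_inBox_and (s := s + 1) P
  rw [Nat.card_subtype_eq_card_and_add_card_and_not _ fun f => f (Fin.last t) = 0]
  congr 1
  · refine Nat.card_congr <| (Fin.snocEquivOfLastEq _ 0).trans <|
      Equiv.subtypeEquivRight fun g => ?_
    rw [inBox_snoc_zero_iff]
  · refine Nat.card_congr <| (Equiv.subtypeEquivRight fun f => ?_).trans <|
      (succEquivOfNeZero fun f => InBox (s + 1) (t + 1) f ∧ P f).trans <|
        Equiv.subtypeEquivRight fun g => ?_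
    · exact and_congr_right fun hf => hf.1.1.forall_ne_zero_iff_last_ne_zero.symm
    · rw [inBox_add_one_iff]

theorem card_inBox (s t : ℕ) : Nat.card {f // InBox s t f} = (s + t).choose t := by
  induction t generalizing s with
  | zero =>
    simp only [Nat.add_zero, Nat.choose_zero_right, Nat.card_eq_one_iff_unique]
    exact ⟨⟨fun f g => Subtype.ext (Subsingleton.elim _ _)⟩,
      ⟨⟨Fin.elim0, fun i => i.elim0, fun i => i.elim0⟩⟩⟩
  | succ t iht =>
    induction s with
    | zero =>
      simp only [Nat.zero_add, Nat.choose_self, Nat.card_eq_one_iff_unique]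
      refine ⟨⟨fun f g => Subtype.ext <| funext fun i => ?_⟩,
        ⟨⟨0, antitone_const, fun _ => le_rfl⟩⟩⟩
      exact (Nat.le_zero.mp (f.2.2 i)).trans (Nat.le_zero.mp (g.2.2 i)).symm
    | succ s ihs =>
      have := card_inBox_succ_succ_and (s := s) (t := t) fun _ => True
      simp only [and_true] at this
      rw [this, iht, ihs, show s + 1 + (t + 1) = s + t + 1 + 1 by omega, Nat.choose_succ_succ',
        Nat.add_right_comm s 1, Nat.add_assoc s t 1]

end InBox

def Touches (m : ℕ) {t : ℕ} (f : Fin t → ℕ) : Prop := ∃ j : Fin t, f j + j + m ≤ t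

section Touches

variable {s t m : ℕ}

theorem Touches.le {f : Fin t → ℕ} (h : Touches m f) : m ≤ t := by
  obtain ⟨j, hj⟩ := h
  omega

theorem touches_succ_snoc_zero_iff {g : Fin t → ℕ} :
    Touches (m + 1) (Fin.snoc g 0 : Fin (t + 1) → ℕ) ↔ m = 0 ∨ Touches m g := by
  simp only [Touches, Fin.exists_fin_succ', Fin.snoc_castSucc, Fin.val_castSucc, Fin.snoc_last,
    Fin.val_last, ← add_assoc, Nat.add_le_add_iff_right, zero_add]
  rw [or_comm]
  exact or_congr_left (by omega)

theorem touches_add_one_iff {g : Fin t → ℕ} : Touches m (g + 1) ↔ Touches (m + 1) g := by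
  simp only [Touches, Pi.add_apply, Pi.one_apply]
  exact exists_congr fun j => by omega

theorem isEmpty_inBox_and_touches (h : t < m) : IsEmpty {f // InBox s t f ∧ Touches m f} :=
  ⟨fun f => (f.2.2.le.trans_lt h).false⟩

theorem card_inBox_and_touches (hm : 0 < m) (h : t < s + m) :
    Nat.card {f // InBox s t f ∧ Touches m f} = (s + t).choose (s + m) := by
  induction t generalizing s m with
  | zero =>
    have := isEmpty_inBox_and_touches (s := s) hm
    rw [Nat.card_of_isEmpty, Nat.choose_eq_zero_of_lt (by omega)]
  | succ t iht =>
    induction s generalizing m with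
    | zero =>
      have := isEmpty_inBox_and_touches (s := 0) (by omega : t + 1 < m)
      rw [Nat.card_of_isEmpty, Nat.choose_eq_zero_of_lt (by omega)]
    | succ s ihs =>
      obtain _ | m := m
      · omega
      have hlast_zero : Nat.card {g : Fin t → ℕ // InBox (s + 1) t g ∧ (m = 0 ∨ Touches m g)} =
          (s + t + 1).choose (s + m + 1) := by
        rcases m.eq_zero_or_pos with rfl | hm'
        · simp only [true_or, and_true, card_inBox]
          rw [add_zero, ← Nat.choose_symm_add, Nat.add_right_comm]
        · simp only [hm'.ne', false_or]
          rw [iht hm' (by omega), Nat.add_right_comm, Nat.add_right_comm s 1 m]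
      rw [card_inBox_succ_succ_and]
      simp only [touches_succ_snoc_zero_iff, touches_add_one_iff]
      rw [hlast_zero, ihs (by omega) (by omega), show s + 1 + (t + 1) = s + t + 1 + 1 by omega,
        show s + 1 + (m + 1) = s + m + 1 + 1 by omega, Nat.choose_succ_succ' (s + t + 1)]
      rfl

end Touches

theorem Antitone.exists_card_filter_le_eq {t : ℕ} {f : Fin t → ℕ} (hf : Antitone f) (j : Fin t) :
    ∃ i ≤ j, f i = f j ∧ #{l | f l ≤ f j} = t - i := by
  have hj : j ∈ ({l | f l ≤ f j} : Finset (Fin t)) := by simp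
  set i := ({l | f l ≤ f j} : Finset (Fin t)).min' ⟨j, hj⟩
  have hij : i ≤ j := min'_le _ j hj
  have hfi : f i ≤ f j := by simpa using min'_mem _ ⟨j, hj⟩
  have hIci : ({l | f l ≤ f j} : Finset (Fin t)) = Ici i := by
    ext l
    refine ⟨fun hl => mem_Ici.mpr (min'_le _ l hl), fun hl => ?_⟩
    simpa using (hf (mem_Ici.mp hl)).trans hfi
  exact ⟨i, hij, hfi.antisymm (hf hij), by rw [hIci, Fin.card_Ici]⟩

theorem exists_le_card_filter_sub_iff_touches {t : ℕ} {f : Fin t → ℕ} (hf : Antitone f) (m : ℕ) :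
    (∃ j, (m : ℤ) ≤ #{i | f i ≤ f j} - f j) ↔ Touches m f := by
  constructor
  · rintro ⟨j, hj⟩
    obtain ⟨i, -, hfi, hcard⟩ := hf.exists_card_filter_le_eq j
    refine ⟨i, ?_⟩
    have := i.isLt
    omega
  · rintro ⟨j, hj⟩
    obtain ⟨i, hij, -, hcard⟩ := hf.exists_card_filter_le_eq j
    refine ⟨j, ?_⟩
    have : (i : ℕ) ≤ j := hij
    omega

theorem le_boxKappa_iff {s t m : ℕ} (hm : 0 < m) (h : t + 1 < s + m) (f : Fin t → ℕ) :
    ((s + m : ℕ) : ℤ) ≤ boxKappa s t f ↔ ∃ j, (m : ℤ) ≤ #{i | f i ≤ f j} - f j := by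
  rw [boxKappa, Nat.cast_add, add_le_add_iff_left, Finset.le_fold_max, or_iff_right]
  · simp only [mem_univ, true_and]
  · rw [le_max_iff]
    omega

theorem card_kappa_ge_general (t s δ k : ℕ) (hδ : δ = t + 1 - s) (hk1 : s + δ < k) :
    Nat.card {f : Fin t → ℕ // Antitone f ∧ (∀ i, f i ≤ s) ∧ (k : ℤ) ≤ boxKappa s t f} =
      Nat.choose (s + t) k := by
  obtain ⟨m, rfl⟩ : ∃ m, k = s + m := ⟨k - s, by omega⟩
  have hm : 0 < m := by omega
  have hsm : t + 1 < s + m := by omega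
  rw [← card_inBox_and_touches hm (by omega)]
  refine Nat.card_congr <| Equiv.subtypeEquivRight fun f => ?_
  rw [InBox, and_assoc, le_boxKappa_iff hm hsm]
  exact and_congr_right fun hf => and_congr_right fun _ =>
    exists_le_card_filter_sub_iff_touches hf m

/-- For a single-block Hilbert function `T = (1,…,d,t,0)`, `s = d+1-t`, `δ = max{t+1-s,0}`
and `s+δ < k ≤ s+t`, the number of partitions `P` of diagonal lengths `T` (identified with
their hook codes, partitions in a `t × s` box) with `κ(P) ≥ k` is `(s+t).choose k`. -/
theorem card_kappa_ge (d t s δ k : ℕ) (ht : 0 < t) (htd : t ≤ d)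
    (hs : s = d + 1 - t) (hδ : δ = t + 1 - s)
    (hk1 : s + δ < k) (hk2 : k ≤ s + t) :
    Nat.card {f : Fin t → ℕ // Antitone f ∧ (∀ i, f i ≤ s) ∧ (k : ℤ) ≤ boxKappa s t f} =
      Nat.choose (s + t) k :=
  card_kappa_ge_general t s δ k hδ hk1
end

section
/- Let T = (1,...,d,t,0) be a single-block Hilbert function, s = d+1-t, δ = max{t+1-s, 0}. The number of partitions P of diagonal lengths T with κ(P) = s+δ (the non-special partitions) equals binom(s+t, s) - binom(s+t, s+δ+1). -/
open Finset
open scoped symmDiff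

section Reflection

variable {n : ℕ}

def prefixCard (A : Finset (Fin n)) (m : ℕ) : ℕ := #{i ∈ A | i.val < m}

lemma prefixCard_zero (A : Finset (Fin n)) : prefixCard A 0 = 0 := by simp [prefixCard]

lemma prefixCard_succ_le (A : Finset (Fin n)) (m : ℕ) :
    prefixCard A (m + 1) ≤ prefixCard A m + 1 := by
  have hstep : #({i ∈ A | i.val < m + 1} \ {i ∈ A | i.val < m}) ≤ 1 :=
    card_le_one.mpr fun a ha b hb => by
      simp only [mem_sdiff, mem_filter, not_and, not_lt] at ha hb
      exact Fin.ext (by have := ha.2 ha.1.1; have := hb.2 hb.1.1; omega)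
  exact (card_le_card_sdiff_add_card (t := {i ∈ A | i.val < m})).trans
    (by unfold prefixCard; omega)

lemma prefixCard_of_le (A : Finset (Fin n)) {m : ℕ} (hm : n ≤ m) : prefixCard A m = #A := by
  rw [prefixCard, filter_true_of_mem fun i _ => by omega]

def flipFrom (m : ℕ) (A : Finset (Fin n)) : Finset (Fin n) :=
  A ∆ ({i | m ≤ i.val} : Finset (Fin n))

lemma flipFrom_flipFrom (m : ℕ) (A : Finset (Fin n)) : flipFrom m (flipFrom m A) = A :=
  symmDiff_symmDiff_cancel_right _ _

lemma prefixCard_flipFrom (A : Finset (Fin n)) {k m : ℕ} (hkm : k ≤ m) :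
    prefixCard (flipFrom m A) k = prefixCard A k := by
  unfold prefixCard flipFrom
  congr 1
  ext i
  simp only [mem_filter, mem_symmDiff, mem_univ, true_and]
  have : i.val < k → ¬ m ≤ i.val := by omega
  tauto

lemma card_flipFrom_add_card (A : Finset (Fin n)) {m : ℕ} (hm : m ≤ n) :
    #(flipFrom m A) + #A = 2 * prefixCard A m + (n - m) := by
  have hB : #({i | m ≤ i.val} : Finset (Fin n)) = n - m := by
    have h := card_filter_add_card_filter_not (s := (univ : Finset (Fin n))) (fun i => i.val < m)
    simp only [Fin.card_filter_val_lt, min_eq_right hm, card_univ, Fintype.card_fin, not_lt] at h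
    omega
  set B : Finset (Fin n) := {i | m ≤ i.val}
  have hAB : A \ B = {i ∈ A | i.val < m} := by ext i; simp [B]
  have hflip : #(flipFrom m A) = #(A \ B) + #(B \ A) := by
    rw [flipFrom, symmDiff_def, sup_eq_union, card_union_of_disjoint disjoint_sdiff_sdiff]
  have hA := card_sdiff_add_card_inter A B
  have hB' := card_sdiff_add_card_inter B A
  rw [inter_comm] at hB'
  rw [prefixCard, ← hAB]
  omega

/-- `A` is read as a lattice path whose `i`-th step is up iff `i ∈ A`; it reaches the line if
some prefix has `c` more up steps than right steps. -/
def ReachesLine (c : ℕ) (A : Finset (Fin n)) : Prop := ∃ m ≤ n, m + c ≤ 2 * prefixCard A m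

instance (c : ℕ) : DecidablePred (ReachesLine (n := n) c) :=
  fun _ => inferInstanceAs (Decidable (∃ m ≤ n, _))

variable {c : ℕ} {A : Finset (Fin n)}

lemma find_reachesLine_le (h : ReachesLine c A) : Nat.find h ≤ n := (Nat.find_spec h).1

/-- Prefix counts grow by at most one per step, so the first point at or beyond the line
is on it. -/
lemma find_reachesLine_add_eq (h : ReachesLine c A) :
    Nat.find h + c = 2 * prefixCard A (Nat.find h) := by
  have hreach := (Nat.find_spec h).2
  rcases hfind : Nat.find h with _ | k
  · have := prefixCard_zero A
    rw [hfind] at hreach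
    omega
  · have hbefore : ¬ (k ≤ n ∧ k + c ≤ 2 * prefixCard A k) := Nat.find_min h (by omega)
    have := prefixCard_succ_le A k
    have := find_reachesLine_le h
    rw [hfind] at hreach this
    omega

lemma find_reachesLine_flipFrom (h : ReachesLine c A) :
    ∃ h' : ReachesLine c (flipFrom (Nat.find h) A), Nat.find h' = Nat.find h := by
  have hflip : ∀ k ≤ Nat.find h, (k ≤ n ∧ k + c ≤ 2 * prefixCard A k) ↔
      (k ≤ n ∧ k + c ≤ 2 * prefixCard (flipFrom (Nat.find h) A) k) := fun k hk => by
    rw [prefixCard_flipFrom A hk]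
  exact ⟨_, (Nat.find_congr (Nat.find_spec h) hflip).symm⟩

def lineReflection (c : ℕ) (A : Finset (Fin n)) : Finset (Fin n) :=
  if h : ReachesLine c A then flipFrom (Nat.find h) A else A

lemma lineReflection_of_reachesLine (h : ReachesLine c A) :
    lineReflection c A = flipFrom (Nat.find h) A :=
  dif_pos h

lemma reachesLine_lineReflection (h : ReachesLine c A) : ReachesLine c (lineReflection c A) := by
  obtain ⟨h', -⟩ := find_reachesLine_flipFrom h
  rwa [lineReflection_of_reachesLine h]

lemma lineReflection_lineReflection (h : ReachesLine c A) :
    lineReflection c (lineReflection c A) = A := by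
  obtain ⟨h', hfind⟩ := find_reachesLine_flipFrom h
  rw [lineReflection_of_reachesLine h, lineReflection_of_reachesLine h', hfind, flipFrom_flipFrom]

lemma card_lineReflection_add_card (h : ReachesLine c A) : #(lineReflection c A) + #A = n + c := by
  have := find_reachesLine_add_eq h
  have := card_flipFrom_add_card A (find_reachesLine_le h)
  have := find_reachesLine_le h
  rw [lineReflection_of_reachesLine h]
  omega

lemma reachesLine_of_card (hA : n + c ≤ 2 * #A) : ReachesLine c A :=
  ⟨n, le_rfl, by rwa [prefixCard_of_le A le_rfl]⟩

/-- André's reflection principle. -/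
theorem card_filter_reachesLine {k : ℕ} (hk : 2 * k ≤ n + c) :
    #{A ∈ powersetCard k (univ : Finset (Fin n)) | ReachesLine c A} = n.choose (n + c - k) := by
  have hcard {j : ℕ} (A : Finset (Fin n)) : A ∈ powersetCard j univ ↔ #A = j := by
    simp [mem_powersetCard]
  rw [show n.choose (n + c - k) = #(powersetCard (n + c - k) (univ : Finset (Fin n))) by simp]
  refine card_nbij' (lineReflection c) (lineReflection c) ?_ ?_ ?_ ?_
  · intro A hA
    rw [mem_coe, mem_filter, hcard] at hA
    have := card_lineReflection_add_card hA.2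
    rw [mem_coe, hcard]
    omega
  · intro B hB
    rw [mem_coe, hcard] at hB
    have hreach : ReachesLine c B := reachesLine_of_card (by omega)
    have := card_lineReflection_add_card hreach
    rw [mem_coe, mem_filter, hcard]
    exact ⟨by omega, reachesLine_lineReflection hreach⟩
  · intro A hA
    rw [mem_coe, mem_filter] at hA
    exact lineReflection_lineReflection hA.2
  · intro B hB
    rw [mem_coe, hcard] at hB
    exact lineReflection_lineReflection (reachesLine_of_card (by omega))

theorem card_filter_not_reachesLine {k : ℕ} (hk : 2 * k ≤ n + c) :
    #{A ∈ powersetCard k (univ : Finset (Fin n)) | ¬ ReachesLine c A} =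
      n.choose k - n.choose (n + c - k) := by
  rw [filter_not, card_sdiff_of_subset (filter_subset _ _), card_filter_reachesLine hk,
    card_powersetCard, card_univ, Fintype.card_fin]

lemma prefixCard_map {t : ℕ} (e : Fin t ↪o Fin n) (m : ℕ) :
    prefixCard (univ.map e.toEmbedding) m = #{i | (e i : ℕ) < m} := by
  rw [prefixCard, filter_map, card_map]
  rfl

lemma reachesLine_map_iff {t : ℕ} (hc : 0 < c) (e : Fin t ↪o Fin n) :
    ReachesLine c (univ.map e.toEmbedding) ↔ ∃ i, (e i : ℕ) + c ≤ 2 * i + 1 := by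
  have hlt (m : ℕ) (i : Fin t) : (i : ℕ) < #{i | (e i : ℕ) < m} ↔ (e i : ℕ) < m :=
    Fin.lt_card_filter_univ_iff_apply_of_imp _ fun _ _ hba hb => lt_of_le_of_lt (e.monotone hba) hb
  simp only [ReachesLine, prefixCard_map]
  constructor
  · rintro ⟨m, hmn, hm⟩
    set u := #{i | (e i : ℕ) < m}
    have hut : u ≤ t := by simpa using card_filter_le univ fun i => (e i : ℕ) < m
    have hlast : (e ⟨u - 1, by omega⟩ : ℕ) < m := (hlt m _).mp (by simp only; omega)
    exact ⟨⟨u - 1, by omega⟩, by simp only; omega⟩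
  · rintro ⟨i, hi⟩
    have := (hlt (e i + 1) i).mpr (by omega)
    exact ⟨e i + 1, (e i).isLt, by omega⟩

end Reflection

namespace OrderEmbedding

variable {t n : ℕ} (e : Fin t ↪o Fin n)

lemma fin_apply_add_sub_le {a b : Fin t} (hab : a ≤ b) : (e a : ℕ) + (b - a) ≤ e b := by
  have h := card_le_card_of_injOn e (s := Icc a b) (t := Icc (e a) (e b))
    (fun i hi => by
      simp only [coe_Icc, Set.mem_Icc] at hi ⊢
      exact ⟨e.monotone hi.1, e.monotone hi.2⟩)
    e.injective.injOn
  have := e.monotone hab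
  simp only [Fin.card_Icc] at h
  rw [Fin.le_def] at hab this
  omega

lemma fin_le_apply (i : Fin t) : (i : ℕ) ≤ e i := by
  have := e.fin_apply_add_sub_le (Fin.le_def.mpr (Nat.zero_le i) : (⟨0, i.pos⟩ : Fin t) ≤ i)
  simp only at this
  omega

lemma fin_apply_le (i : Fin t) : (e i : ℕ) ≤ i + (n - t) := by
  have := i.pos
  have hlast : i ≤ ⟨t - 1, by omega⟩ := Fin.le_def.mpr (Nat.le_sub_one_of_lt i.isLt)
  have := e.fin_apply_add_sub_le hlast
  have := (e ⟨t - 1, by omega⟩).isLt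
  have := i.isLt
  simp only at *
  omega

end OrderEmbedding

def hookCodeEquiv (s t : ℕ) :
    {f : Fin t → ℕ // Antitone f ∧ ∀ i, f i ≤ s} ≃ (Fin t ↪o Fin (s + t)) where
  toFun f := OrderEmbedding.ofStrictMono
    (fun i => ⟨f.1 i.rev + i, by have := f.2.2 i.rev; omega⟩)
    (fun i j hij => by
      have := f.2.1 (Fin.rev_le_rev.mpr hij.le)
      rw [Fin.lt_def] at hij ⊢
      simp only
      omega)
  invFun e := ⟨fun j => e j.rev - j.rev,
    fun j j' hjj' => by
      have := e.fin_apply_add_sub_le (Fin.rev_le_rev.mpr hjj')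
      have := Fin.le_def.mp (Fin.rev_le_rev.mpr hjj')
      change (e j'.rev : ℕ) - j'.rev ≤ (e j.rev : ℕ) - j.rev
      omega,
    fun j => by have := e.fin_apply_le j.rev; simp only [Fin.val_rev] at *; omega⟩
  left_inv f := by
    ext j
    change f.1 j.rev.rev + j.rev - j.rev = f.1 j
    simp
  right_inv e := by ext i; simp [Nat.sub_add_cancel (e.fin_le_apply i)]

lemma hookCodeEquiv_apply (s t : ℕ) (f : {f : Fin t → ℕ // Antitone f ∧ ∀ i, f i ≤ s})
    (i : Fin t) : (hookCodeEquiv s t f i : ℕ) = f.1 i.rev + i := rfl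

lemma boxKappa_eq_iff {s t δ : ℕ} (hδ : δ = t + 1 - s) (f : Fin t → ℕ) :
    boxKappa s t f = s + δ ↔ ∀ j, #{i | f i ≤ f j} ≤ f j + δ := by
  have hbase : max ((t : ℤ) + 1 - s) 0 = δ := by omega
  rw [boxKappa, hbase, add_right_inj, le_antisymm_iff,
    and_iff_left ((le_fold_max _).mpr (.inl le_rfl)), fold_max_le]
  simp only [le_refl, true_and, mem_univ, forall_const]
  exact forall_congr' fun j => by omega

lemma forall_card_le_iff {t : ℕ} {f : Fin t → ℕ} (hf : Antitone f) (δ : ℕ) :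
    (∀ j, #{i | f i ≤ f j} ≤ f j + δ) ↔ ∀ j : Fin t, t ≤ f j + j + δ := by
  refine ⟨fun h j => ?_, fun h j => ?_⟩
  · have hIci : Ici j ⊆ ({i | f i ≤ f j} : Finset (Fin t)) := fun i hi => by
      simpa using hf (mem_Ici.mp hi)
    have := h j
    have := card_le_card hIci
    rw [Fin.card_Ici] at this
    omega
  · set S : Finset (Fin t) := {i | f i ≤ f j}
    have hS : S.Nonempty := ⟨j, by simp [S]⟩
    have hmin : f (S.min' hS) ≤ f j := by simpa [S] using S.min'_mem hS
    have hsub : S ⊆ Ici (S.min' hS) := fun i hi => mem_Ici.mpr (S.min'_le i hi)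
    have hcard := card_le_card hsub
    have := h (S.min' hS)
    rw [Fin.card_Ici] at hcard
    omega

lemma boxKappa_eq_iff_not_reachesLine {s t δ : ℕ} (hδ : δ = t + 1 - s)
    (f : {f : Fin t → ℕ // Antitone f ∧ ∀ i, f i ≤ s}) :
    boxKappa s t f = s + δ ↔
      ¬ ReachesLine (δ + 1) (univ.map (hookCodeEquiv s t f).toEmbedding) := by
  rw [boxKappa_eq_iff hδ, forall_card_le_iff f.2.1, reachesLine_map_iff (Nat.succ_pos δ),
    not_exists, Fin.rev_surjective.forall]
  refine forall_congr' fun i => ?_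
  rw [hookCodeEquiv_apply, Fin.val_rev]
  omega

lemma natCard_powersetCard_subtype {α : Type*} [Fintype α] [DecidableEq α] (k : ℕ)
    (p : Finset α → Prop) [DecidablePred p] :
    Nat.card {A : Set.powersetCard α k // p A} = #{A ∈ powersetCard k univ | p A} := by
  rw [Nat.card_congr (Equiv.subtypeSubtypeEquivSubtypeInter (· ∈ Set.powersetCard α k) p),
    ← Nat.card_eq_finsetCard]
  exact Nat.card_congr (Equiv.subtypeEquivRight fun A => by
    simp [Set.powersetCard.mem_iff, mem_powersetCard])

theorem card_nonspecial_general (t s δ : ℕ) (hδ : δ = t + 1 - s) :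
    Nat.card {f : Fin t → ℕ // Antitone f ∧ (∀ i, f i ≤ s) ∧
        boxKappa s t f = (s : ℤ) + δ} =
      Nat.choose (s + t) s - Nat.choose (s + t) (s + δ + 1) := by
  have hkappa (f : {f : Fin t → ℕ // Antitone f ∧ ∀ i, f i ≤ s}) :
      boxKappa s t f = s + δ ↔
        ¬ ReachesLine (δ + 1) (Set.powersetCard.ofFinEmbEquiv (hookCodeEquiv s t f)).val := by
    rw [Set.powersetCard.ofFinEmbEquiv_apply, Set.powersetCard.val_ofFinEmb]
    exact boxKappa_eq_iff_not_reachesLine hδ f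
  calc Nat.card {f : Fin t → ℕ // Antitone f ∧ (∀ i, f i ≤ s) ∧
          boxKappa s t f = (s : ℤ) + δ}
      = Nat.card {f : {f : Fin t → ℕ // Antitone f ∧ ∀ i, f i ≤ s} //
          boxKappa s t f = s + δ} :=
        Nat.card_congr ((Equiv.subtypeEquivRight fun _ => and_assoc.symm).trans
          (Equiv.subtypeSubtypeEquivSubtypeInter _ _).symm)
    _ = Nat.card {A : Set.powersetCard (Fin (s + t)) t // ¬ ReachesLine (δ + 1) A.val} :=
        Nat.card_congr (((hookCodeEquiv s t).trans Set.powersetCard.ofFinEmbEquiv).subtypeEquiv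
          hkappa)
    _ = #{A ∈ powersetCard t univ | ¬ ReachesLine (δ + 1) A} :=
        natCard_powersetCard_subtype t (¬ ReachesLine (δ + 1) ·)
    _ = (s + t).choose t - (s + t).choose (s + t + (δ + 1) - t) :=
        card_filter_not_reachesLine (by omega)
    _ = (s + t).choose s - (s + t).choose (s + δ + 1) := by
        rw [Nat.choose_symm_add, show s + t + (δ + 1) - t = s + δ + 1 by omega]

/-- For a single-block Hilbert function `T = (1,…,d,t,0)`, `s = d+1-t`, `δ = max{t+1-s,0}`,
the number of non-special partitions of diagonal lengths `T` (those with `κ(P) = s+δ`,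
identified with their hook codes in a `t × s` box) is
`(s+t).choose s - (s+t).choose (s+δ+1)`. -/
theorem card_nonspecial (d t s δ : ℕ) (ht : 0 < t) (htd : t ≤ d)
    (hs : s = d + 1 - t) (hδ : δ = t + 1 - s) :
    Nat.card {f : Fin t → ℕ // Antitone f ∧ (∀ i, f i ≤ s) ∧
        boxKappa s t f = (s : ℤ) + δ} =
      Nat.choose (s + t) s - Nat.choose (s + t) (s + δ + 1) :=
  card_nonspecial_general t s δ hδ
end

section
/- Let T = (1,...,d,t,0) be a single-block Hilbert function, s = d+1-t, δ = max{t+1-s, 0}, and define μ(T,k) as the number of partitions of diagonal lengths T with κ(P) = k. Then μ(T,k) = binom(s+t,s) − binom(s+t, s+δ+1) if k = s+δ; μ(T,k) = binom(s+t,k) − binom(s+t,k+1) if s+δ < k ≤ s+t; and μ(T,k) = 0 otherwise. -/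
/-- `μ(T,k)`: the number of partitions of diagonal lengths the single-block `T` (identified
with their hook codes, partitions in a `t × s` box) whose invariant `κ` equals `k`. -/
noncomputable def muSingle (s t : ℕ) (k : ℤ) : ℕ :=
  Nat.card {f : Fin t → ℕ // Antitone f ∧ (∀ i, f i ≤ s) ∧ boxKappa s t f = k}

lemma finite_aux {t s : ℕ} {P : (Fin t → ℕ) → Prop}
    (h : ∀ f, P f → ∀ i, f i ≤ s) : Finite {f : Fin t → ℕ // P f} := by
  apply Finite.of_injective (fun F : {f : Fin t → ℕ // P f} =>
    (fun i => (⟨F.1 i, Nat.lt_succ_of_le (h F.1 F.2 i)⟩ : Fin (s + 1))))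
  intro F G hFG
  apply Subtype.ext
  funext i
  exact congrArg Fin.val (congrFun hFG i)

noncomputable def Npart (s t m : ℕ) : ℕ :=
  Nat.card {f : Fin t → ℕ // Antitone f ∧ (∀ i, f i ≤ s) ∧ ∀ j : Fin t, m ≤ f j + (j : ℕ)}

lemma antitone_cons {t : ℕ} (a : ℕ) (g : Fin t → ℕ) (hg : Antitone g)
    (ha : ∀ i, g i ≤ a) : Antitone (Fin.cons a g) := by
  intro i j hij
  induction j using Fin.cases with
  | zero =>
      have : i = 0 := le_antisymm hij (Fin.zero_le i)
      subst this; rfl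
  | succ j' =>
      induction i using Fin.cases with
      | zero => simpa using ha j'
      | succ i' =>
          simp only [Fin.cons_succ]
          exact hg (Fin.succ_le_succ_iff.mp hij)

def splitEquiv (s t m : ℕ) :
    {f : Fin (t+1) → ℕ // Antitone f ∧ (∀ i, f i ≤ s) ∧ ∀ j : Fin (t+1), m ≤ f j + (j : ℕ)} ≃
    Σ a : Fin (s+1), {g : Fin t → ℕ // (m ≤ (a : ℕ) ∧ Antitone g) ∧ (∀ i, g i ≤ (a : ℕ)) ∧
      ∀ j : Fin t, m - 1 ≤ g j + (j : ℕ)} where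
  toFun F := ⟨⟨F.1 0, Nat.lt_succ_of_le (F.2.2.1 0)⟩,
    ⟨Fin.tail F.1, ⟨⟨by simpa using F.2.2.2 0, fun i j hij => F.2.1 (Fin.succ_le_succ_iff.mpr hij)⟩,
      fun i => F.2.1 (Fin.zero_le i.succ),
      fun j => by
        have := F.2.2.2 j.succ
        simp only [Fin.val_succ] at this
        show m - 1 ≤ F.1 j.succ + (j : ℕ)
        omega⟩⟩⟩
  invFun P := ⟨Fin.cons (P.1 : ℕ) P.2.1,
    ⟨antitone_cons _ _ P.2.2.1.2 P.2.2.2.1,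
     fun i => by
       induction i using Fin.cases with
       | zero => simpa using Fin.is_le P.1
       | succ i' => simpa using le_trans (P.2.2.2.1 i') (Fin.is_le P.1),
     fun j => by
       induction j using Fin.cases with
       | zero => simpa using P.2.2.1.1
       | succ j' =>
           have := P.2.2.2.2 j'
           simp only [Fin.cons_succ, Fin.val_succ]
           omega⟩⟩
  left_inv F := Subtype.ext (Fin.cons_self_tail F.1)
  right_inv P := by
    rcases P with ⟨a, g, hg⟩
    simp only [Fin.cons_zero, Fin.tail_cons]
    rfl

lemma Npart_succ (s t m : ℕ) :
    Npart s (t+1) m = ∑ a ∈ Finset.Icc m s, Npart a t (m-1) := by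
  haveI h1 : Finite {f : Fin (t+1) → ℕ // Antitone f ∧ (∀ i, f i ≤ s) ∧
      ∀ j : Fin (t+1), m ≤ f j + (j : ℕ)} := finite_aux (fun f hf => hf.2.1)
  haveI h2 : ∀ a : Fin (s+1), Finite {g : Fin t → ℕ // (m ≤ (a : ℕ) ∧ Antitone g) ∧
      (∀ i, g i ≤ (a : ℕ)) ∧ ∀ j : Fin t, m - 1 ≤ g j + (j : ℕ)} :=
    fun a => finite_aux (fun g hg => hg.2.1)
  haveI h3 := fun a : Fin (s+1) => Fintype.ofFinite {g : Fin t → ℕ // (m ≤ (a : ℕ) ∧ Antitone g) ∧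
      (∀ i, g i ≤ (a : ℕ)) ∧ ∀ j : Fin t, m - 1 ≤ g j + (j : ℕ)}
  rw [Npart, Nat.card_congr (splitEquiv s t m), Nat.card_eq_fintype_card, Fintype.card_sigma]
  have key : ∀ a : Fin (s+1), Fintype.card {g : Fin t → ℕ // (m ≤ (a : ℕ) ∧ Antitone g) ∧
      (∀ i, g i ≤ (a : ℕ)) ∧ ∀ j : Fin t, m - 1 ≤ g j + (j : ℕ)} =
      if m ≤ (a : ℕ) then Npart (a : ℕ) t (m-1) else 0 := by
    intro a
    by_cases hma : m ≤ (a : ℕ)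
    · rw [if_pos hma, ← Nat.card_eq_fintype_card, Npart]
      exact Nat.card_congr (Equiv.subtypeEquivRight (fun g => by tauto))
    · rw [if_neg hma, Fintype.card_eq_zero_iff]
      exact ⟨fun g => hma g.2.1.1⟩
  simp_rw [key]
  rw [Fin.sum_univ_eq_sum_range (fun a => if m ≤ a then Npart a t (m-1) else 0) (s+1)]
  have hset : (Finset.range (s+1)).filter (fun a => m ≤ a) = Finset.Icc m s := by
    ext x; simp [Finset.mem_Icc, Nat.lt_succ_iff]; omega
  rw [← hset, Finset.sum_filter]

lemma Npart_zero_t (s m : ℕ) : Npart s 0 m = 1 := by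
  haveI : Unique {f : Fin 0 → ℕ // Antitone f ∧ (∀ i, f i ≤ s) ∧
      ∀ j : Fin 0, m ≤ f j + (j : ℕ)} :=
    ⟨⟨⟨fun j => j.elim0, ⟨fun i _ _ => i.elim0, fun i => i.elim0, fun j => j.elim0⟩⟩⟩,
      fun f => Subtype.ext (funext fun j => j.elim0)⟩
  exact Nat.card_unique

lemma partial_hs (r : ℕ) : ∀ M n0 : ℕ, n0 ≤ M + 1 →
    (∑ i ∈ Finset.Icc n0 M, Nat.choose i r) + Nat.choose n0 (r+1) =
      Nat.choose (M+1) (r+1) := by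
  intro M
  induction M with
  | zero =>
      intro n0 h
      interval_cases n0
      · simp [Nat.choose_succ_succ']
      · simp
  | succ M ih =>
      intro n0 h
      rcases Nat.lt_or_ge n0 (M+2) with h' | h'
      · have hsub : n0 ≤ M + 1 := by omega
        have hins : Finset.Icc n0 (M+1) = insert (M+1) (Finset.Icc n0 M) := by
          ext x; simp [Finset.mem_Icc]; omega
        rw [hins, Finset.sum_insert (by simp [Finset.mem_Icc])]
        have h4 := ih n0 hsub
        have hp : Nat.choose (M+1+1) (r+1) = Nat.choose (M+1) r + Nat.choose (M+1) (r+1) :=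
          Nat.choose_succ_succ' (M+1) r
        omega
      · have : n0 = M + 2 := by omega
        subst this
        rw [Finset.Icc_eq_empty_of_lt (by omega)]
        simp

lemma sum_shift (m s t r : ℕ) :
    ∑ a ∈ Finset.Icc m s, Nat.choose (a+t) r = ∑ i ∈ Finset.Icc (m+t) (s+t), Nat.choose i r := by
  rw [← Finset.map_add_right_Icc m s t, Finset.sum_map]
  simp [addRightEmbedding]

def badC (n m : ℕ) : ℕ := match m with | 0 => 0 | q+1 => n.choose q

lemma Npart_formula : ∀ t s m : ℕ, m ≤ s → m ≤ t →
    Npart s t m + badC (s+t) m = (s+t).choose t := by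
  intro t
  induction t with
  | zero =>
      intro s m _ hmt
      have hm : m = 0 := Nat.le_zero.mp hmt
      subst hm
      simp [badC, Npart_zero_t]
  | succ t ih =>
      intro s m hms hmt
      rw [Npart_succ, show s + (t+1) = s + t + 1 from rfl]
      rcases m with _ | q
      · have hc : ∀ a ∈ Finset.Icc 0 s, Npart a t (0-1) = (a+t).choose t := by
          intro a _
          have := ih a 0 (Nat.zero_le a) (Nat.zero_le t)
          simpa [badC] using this
        rw [Finset.sum_congr rfl hc, sum_shift]
        have h5 := partial_hs t (s+t) (0+t) (by omega)
        have h6 : (0+t).choose (t+1) = 0 := Nat.choose_eq_zero_of_lt (by omega)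
        simp only [badC]
        omega
      · have hq_t : q ≤ t := by omega
        have hterm : ∀ a ∈ Finset.Icc (q+1) s, Npart a t ((q+1)-1) + badC (a+t) q = (a+t).choose t := by
          intro a ha
          have haq : q ≤ a := by have := (Finset.mem_Icc.mp ha).1; omega
          simpa using ih a q haq hq_t
        have hsum : (∑ a ∈ Finset.Icc (q+1) s, Npart a t ((q+1)-1)) +
            (∑ a ∈ Finset.Icc (q+1) s, badC (a+t) q) =
            ∑ a ∈ Finset.Icc (q+1) s, (a+t).choose t := by
          rw [← Finset.sum_add_distrib]; exact Finset.sum_congr rfl hterm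
        have h1 : (∑ a ∈ Finset.Icc (q+1) s, (a+t).choose t) + (q+1+t).choose (t+1) =
            (s+t+1).choose (t+1) := by
          rw [sum_shift]; exact partial_hs t (s+t) (q+1+t) (by omega)
        rcases q with _ | r
        · have hz : ∀ a ∈ Finset.Icc (0+1) s, badC (a+t) 0 = 0 := fun a _ => rfl
          rw [Finset.sum_congr rfl hz] at hsum
          have h7 : (0+1+t).choose (t+1) = 1 := by
            rw [show 0+1+t = t+1 by omega]; exact Nat.choose_self _
          simp only [badC, Finset.sum_const_zero, Nat.choose_zero_right] at hsum ⊢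
          omega
        · have hbad : ∀ a ∈ Finset.Icc (r+1+1) s, badC (a+t) (r+1) = (a+t).choose r :=
            fun a _ => rfl
          rw [Finset.sum_congr rfl hbad] at hsum
          have h2 : (∑ a ∈ Finset.Icc (r+1+1) s, (a+t).choose r) + (r+1+1+t).choose (r+1) =
              (s+t+1).choose (r+1) := by
            rw [sum_shift]; exact partial_hs r (s+t) (r+1+1+t) (by omega)
          have hsymm : (r+1+1+t).choose (t+1) = (r+1+1+t).choose (r+1) := by
            have hle : t+1 ≤ r+1+1+t := by omega
            have := Nat.choose_symm hle
            rw [show r+1+1+t - (t+1) = r+1 by omega] at this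
            omega
          simp only [badC]
          omega

lemma fold_eq {t : ℕ} {f : Fin t → ℕ} (hf : Antitone f) (b : ℤ) :
    Finset.fold max b
      (fun j => ((Finset.univ.filter fun i => f i ≤ f j).card : ℤ) - f j) Finset.univ
      = Finset.fold max b (fun j : Fin t => (t : ℤ) - (j : ℕ) - f j) Finset.univ := by
  apply le_antisymm
  · rw [Finset.fold_max_le]
    refine ⟨(Finset.le_fold_max _).mpr (Or.inl le_rfl), ?_⟩
    intro j _
    have hjA : j ∈ Finset.univ.filter fun i => f i ≤ f j := by simp
    have hne : (Finset.univ.filter fun i => f i ≤ f j).Nonempty := ⟨j, hjA⟩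
    set a := (Finset.univ.filter fun i => f i ≤ f j).min' hne with ha
    have haA := Finset.min'_mem _ hne
    have hfa : f a ≤ f j := (Finset.mem_filter.mp haA).2
    have hAI : (Finset.univ.filter fun i => f i ≤ f j) = Finset.Ici a := by
      ext i
      simp only [Finset.mem_Ici, Finset.mem_filter, Finset.mem_univ, true_and]
      constructor
      · intro hi; exact Finset.min'_le _ i (by simp [hi])
      · intro hai; exact le_trans (hf hai) hfa
    have hcard : (Finset.univ.filter fun i => f i ≤ f j).card = t - (a : ℕ) := by
      rw [hAI, Fin.card_Ici]
    have h1 : (a : ℕ) ≤ t := le_of_lt a.isLt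
    have hle : (((Finset.univ.filter fun i => f i ≤ f j).card : ℤ) - f j)
        ≤ (t : ℤ) - (a : ℕ) - f a := by omega
    exact le_trans hle ((Finset.le_fold_max _).mpr (Or.inr ⟨a, Finset.mem_univ a, le_rfl⟩))
  · rw [Finset.fold_max_le]
    refine ⟨(Finset.le_fold_max _).mpr (Or.inl le_rfl), ?_⟩
    intro j _
    have hsub : Finset.Ici j ⊆ Finset.univ.filter fun i => f i ≤ f j := by
      intro i hi
      simp only [Finset.mem_filter, Finset.mem_univ, true_and]
      exact hf (Finset.mem_Ici.mp hi)
    have hcard : t - (j : ℕ) ≤ (Finset.univ.filter fun i => f i ≤ f j).card := by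
      rw [← Fin.card_Ici]; exact Finset.card_le_card hsub
    have hle : (t : ℤ) - (j : ℕ) - f j
        ≤ ((Finset.univ.filter fun i => f i ≤ f j).card : ℤ) - f j := by omega
    exact le_trans hle ((Finset.le_fold_max _).mpr (Or.inr ⟨j, Finset.mem_univ j, le_rfl⟩))

/-- For a single-block Hilbert function `T = (1,…,d,t,0)`, `s = d+1-t`, `δ = max{t+1-s,0}`:
`μ(T,k) = (s+t).choose s - (s+t).choose (s+δ+1)` if `k = s+δ`;
`μ(T,k) = (s+t).choose k - (s+t).choose (k+1)` if `s+δ < k ≤ s+t`; `μ(T,k) = 0` otherwise. -/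
theorem muSingle_formula (d t s δ : ℕ) (ht : 0 < t) (htd : t ≤ d)
    (hs : s = d + 1 - t) (hδ : δ = t + 1 - s) (k : ℕ) (hk : 0 < k) :
    (k = s + δ → muSingle s t k = Nat.choose (s + t) s - Nat.choose (s + t) (s + δ + 1)) ∧
      (s + δ < k ∧ k ≤ s + t →
        muSingle s t k = Nat.choose (s + t) k - Nat.choose (s + t) (k + 1)) ∧
      (k ≠ s + δ ∧ ¬(s + δ < k ∧ k ≤ s + t) → muSingle s t k = 0) := by
  have hs1 : 1 ≤ s := by omega
  have hδt : δ ≤ t := by omega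
  set b : ℤ := max ((t : ℤ) + 1 - (s : ℤ)) 0 with hb
  have hbδ : (δ : ℤ) = b := by
    rcases le_total ((t : ℤ) + 1 - (s : ℤ)) 0 with h | h
    · rw [hb, max_eq_right h]; omega
    · rw [hb, max_eq_left h]; omega
  have hκ : ∀ f : Fin t → ℕ, Antitone f → boxKappa s t f =
      (s : ℤ) + Finset.fold max b (fun j : Fin t => (t : ℤ) - (j : ℕ) - f j) Finset.univ := by
    intro f hf
    unfold boxKappa
    rw [fold_eq hf]
  -- global bounds
  have hκ_ge : ∀ f : Fin t → ℕ, (s : ℤ) + δ ≤ boxKappa s t f := by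
    intro f
    unfold boxKappa
    rw [← hb]
    have : b ≤ Finset.fold max b
        (fun j => ((Finset.univ.filter fun i => f i ≤ f j).card : ℤ) - f j) Finset.univ :=
      (Finset.le_fold_max _).mpr (Or.inl le_rfl)
    omega
  have hκ_le : ∀ f : Fin t → ℕ, boxKappa s t f ≤ (s : ℤ) + t := by
    intro f
    unfold boxKappa
    rw [← hb]
    have : Finset.fold max b
        (fun j => ((Finset.univ.filter fun i => f i ≤ f j).card : ℤ) - f j) Finset.univ
        ≤ (t : ℤ) := by
      rw [Finset.fold_max_le]
      refine ⟨by rw [hb]; apply max_le <;> omega, ?_⟩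
      intro j _
      have hc : (Finset.univ.filter fun i => f i ≤ f j).card ≤ t :=
        le_trans (Finset.card_filter_le _ _) (by simp)
      omega
    omega
  refine ⟨?_, ?_, ?_⟩
  · -- k = s + δ
    intro hk1
    subst hk1
    have hcase1 : ∀ f : Fin t → ℕ, Antitone f →
        (boxKappa s t f = ((s + δ : ℕ) : ℤ) ↔ ∀ j : Fin t, t - δ ≤ f j + (j : ℕ)) := by
      intro f hf
      rw [hκ f hf]
      set G := Finset.fold max b (fun j : Fin t => (t : ℤ) - (j : ℕ) - f j) Finset.univ with hG
      have hfoldle : ∀ c : ℤ, G ≤ c ↔ b ≤ c ∧ ∀ j : Fin t, (t : ℤ) - (j : ℕ) - f j ≤ c := by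
        intro c; rw [hG, Finset.fold_max_le]; simp
      have hGge : (δ : ℤ) ≤ G := by
        rw [hG, hbδ]; exact (Finset.le_fold_max _).mpr (Or.inl le_rfl)
      constructor
      · intro h j
        have hGle : G ≤ (δ : ℤ) := by push_cast at h; omega
        have := ((hfoldle (δ : ℤ)).mp hGle).2 j
        have hjt : (j : ℕ) < t := j.isLt
        omega
      · intro hall
        have hGle : G ≤ (δ : ℤ) := (hfoldle (δ : ℤ)).mpr
          ⟨hbδ.ge, fun j => by have := hall j; have hjt : (j : ℕ) < t := j.isLt; omega⟩
        push_cast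
        omega
    have he : muSingle s t ((s + δ : ℕ) : ℤ) = Npart s t (t - δ) := by
      rw [muSingle, Npart]
      refine Nat.card_congr (Equiv.subtypeEquivRight fun f => ?_)
      constructor
      · rintro ⟨h1, h2, h3⟩; exact ⟨h1, h2, (hcase1 f h1).mp h3⟩
      · rintro ⟨h1, h2, h3⟩; exact ⟨h1, h2, (hcase1 f h1).mpr h3⟩
    rw [he]
    have hF := Npart_formula t s (t - δ) (by omega) (by omega)
    have hsymm1 : (s + t).choose s = (s + t).choose t := by
      have h0 := Nat.choose_symm (show s ≤ s + t by omega)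
      rw [show s + t - s = t by omega] at h0
      exact h0.symm
    rcases hq : t - δ with _ | q
    · rw [hq] at hF
      simp only [badC] at hF
      have h0 : (s + t).choose (s + δ + 1) = 0 := Nat.choose_eq_zero_of_lt (by omega)
      omega
    · rw [hq] at hF
      simp only [badC] at hF
      have h0 : (s + t).choose (s + δ + 1) = (s + t).choose q := by
        have h1 := Nat.choose_symm (show s + δ + 1 ≤ s + t by omega)
        rw [show s + t - (s + δ + 1) = q by omega] at h1
        exact h1.symm
      omega
  · -- s + δ < k ≤ s + t
    rintro ⟨hk1, hk2⟩
    set m : ℕ := s + t - k with hm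
    have hcase2 : ∀ f : Fin t → ℕ, Antitone f →
        (boxKappa s t f = (k : ℤ) ↔
          ((∀ j : Fin t, m ≤ f j + (j : ℕ)) ∧ ¬ ∀ j : Fin t, m + 1 ≤ f j + (j : ℕ))) := by
      intro f hf
      rw [hκ f hf]
      set G := Finset.fold max b (fun j : Fin t => (t : ℤ) - (j : ℕ) - f j) Finset.univ with hG
      have hfoldle : ∀ c : ℤ, G ≤ c ↔ b ≤ c ∧ ∀ j : Fin t, (t : ℤ) - (j : ℕ) - f j ≤ c := by
        intro c; rw [hG, Finset.fold_max_le]; simp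
      constructor
      · intro h
        have hGle : G ≤ (k : ℤ) - s := by omega
        have hallZ := ((hfoldle _).mp hGle).2
        refine ⟨fun j => by have := hallZ j; have hjt : (j : ℕ) < t := j.isLt; omega, ?_⟩
        intro hall
        have hGle' : G ≤ (k : ℤ) - s - 1 := (hfoldle _).mpr
          ⟨by omega, fun j => by have := hall j; have hjt : (j : ℕ) < t := j.isLt; omega⟩
        omega
      · rintro ⟨hall, hnot⟩
        have hub : G ≤ (k : ℤ) - s := (hfoldle _).mpr
          ⟨by omega, fun j => by have := hall j; have hjt : (j : ℕ) < t := j.isLt; omega⟩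
        obtain ⟨j, hj⟩ := not_forall.mp hnot
        have hj' : f j + (j : ℕ) ≤ m := by omega
        have hlb : (k : ℤ) - s ≤ G := by
          refine le_trans ?_ ((Finset.le_fold_max _).mpr (Or.inr ⟨j, Finset.mem_univ j, le_rfl⟩))
          have hjt : (j : ℕ) < t := j.isLt
          omega
        omega
    set S1 : Set (Fin t → ℕ) :=
      {f | Antitone f ∧ (∀ i, f i ≤ s) ∧ ∀ j : Fin t, m ≤ f j + (j : ℕ)} with hS1
    set S2 : Set (Fin t → ℕ) :=
      {f | Antitone f ∧ (∀ i, f i ≤ s) ∧ ∀ j : Fin t, m + 1 ≤ f j + (j : ℕ)} with hS2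
    have hsub : S2 ⊆ S1 := by
      rintro f ⟨h1, h2, h3⟩
      exact ⟨h1, h2, fun j => le_trans (by omega) (h3 j)⟩
    haveI hfin1 : Finite ↥S1 := finite_aux (fun f hf => hf.2.1)
    haveI hfin2 : Finite ↥S2 := finite_aux (fun f hf => hf.2.1)
    have hc1 : S1.ncard = Npart s t m := by
      rw [← Nat.card_coe_set_eq, Npart]
      exact Nat.card_congr (Equiv.subtypeEquivRight fun f => Iff.rfl)
    have hc2 : S2.ncard = Npart s t (m + 1) := by
      rw [← Nat.card_coe_set_eq, Npart]
      exact Nat.card_congr (Equiv.subtypeEquivRight fun f => Iff.rfl)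
    have hmu : muSingle s t (k : ℤ) = (S1 \ S2).ncard := by
      rw [muSingle, ← Nat.card_coe_set_eq]
      refine Nat.card_congr (Equiv.subtypeEquivRight fun f => ?_)
      constructor
      · rintro ⟨h1, h2, h3⟩
        obtain ⟨hall, hnot⟩ := (hcase2 f h1).mp h3
        exact ⟨⟨h1, h2, hall⟩, fun hmem => hnot hmem.2.2⟩
      · rintro ⟨⟨h1, h2, hall⟩, hn2⟩
        exact ⟨h1, h2, (hcase2 f h1).mpr ⟨hall, fun hh => hn2 ⟨h1, h2, hh⟩⟩⟩
    have hdiff := Set.ncard_diff_add_ncard_of_subset hsub (Set.toFinite S1)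
    have hF1 := Npart_formula t s m (by omega) (by omega)
    have hF2 := Npart_formula t s (m + 1) (by omega) (by omega)
    have hch1 : (s + t).choose k = (s + t).choose m := by
      have h1 := Nat.choose_symm hk2
      rw [show s + t - k = m from rfl] at h1
      exact h1.symm
    simp only [badC] at hF2
    rcases hq : m with _ | q
    · have hm0 : k = s + t := by omega
      have hch2 : (s + t).choose (k + 1) = 0 := Nat.choose_eq_zero_of_lt (by omega)
      rw [hq] at hF1
      simp only [badC] at hF1
      rw [hq] at hF2 hc1 hc2 hch1
      omega
    · have hch2 : (s + t).choose (k + 1) = (s + t).choose q := by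
        have h1 := Nat.choose_symm (show k + 1 ≤ s + t by omega)
        rw [show s + t - (k + 1) = q by omega] at h1
        exact h1.symm
      rw [hq] at hF1
      simp only [badC] at hF1
      rw [hq] at hF2 hc1 hc2 hch1
      omega
  · -- outside the range
    rintro ⟨hk1, hk2⟩
    have hout : k < s + δ ∨ s + t < k := by omega
    rw [muSingle]
    haveI : IsEmpty {f : Fin t → ℕ // Antitone f ∧ (∀ i, f i ≤ s) ∧ boxKappa s t f = (k : ℤ)} := by
      refine ⟨fun F => ?_⟩
      have h3 := F.2.2.2
      have hge := hκ_ge F.1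
      have hle := hκ_le F.1
      rcases hout with h | h <;> omega
    exact Nat.card_of_isEmpty
end

section
/- Let P be encoded by a hook code (h_1^{l_1},...,h_n^{l_n}) in a t × s box with h_n = 0, and let P̄ be encoded by (h_1^{l_1},...,h_n^{l_n - 1}) in a (t-1) × s box (dropping the last column of the code). Then κ(P) = κ(P̄) + 1, where κ is computed by the formula κ = s + max{t+1-s, 0, τ_1,...,τ_n} with the respective parameters (s, t) and (s, t-1). -/
/-!
Every suffix sum `l_k + ⋯ + l_n` contains `l_n`, so lowering `l_n` by one lowers every `τ_k` by one,
and lowering `t` by one lowers `t + 1 - s` by one. Only the constant `0` in the maximum does not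
move, and it never matters: since `h_n = 0`, `τ_n = l_n ≥ 1` beats it before the step and
`τ_n - 1 ≥ 0` ties with it after.
-/

/-- `κ` computed from a hook code `(h_1^{l_1},…,h_n^{l_n})` in a `t × s` box:
`κ = s + max{t+1-s, 0, τ_1, …, τ_n}` where `τ_k = (l_k + ⋯ + l_n) - h_k`. -/
def kappaCode (s t n : ℕ) (h l : Fin n → ℕ) : ℤ :=
  s + Finset.fold max (max ((t : ℤ) + 1 - s) 0)
    (fun k => (∑ i ∈ Finset.univ.filter (fun i => k ≤ i), (l i : ℤ)) - h k) Finset.univ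

namespace Finset

theorem fold_max_add_right {α β : Type*} [LinearOrder β] [Add β] [AddRightMono β]
    (s : Finset α) (b c : β) (f : α → β) :
    s.fold max (b + c) (fun x => f x + c) = s.fold max b f + c :=
  fold_hom (m := fun z => z + c) fun x y => (max_add_add_right x y c).symm

theorem fold_max_congr_init {α β : Type*} [LinearOrder β] {s : Finset α} {f : α → β}
    {x : α} (hx : x ∈ s) {b b' : β} (hb : max b (f x) = max b' (f x)) :
    s.fold max b f = s.fold max b' f := by
  have key : ∀ b b' : β, max b (f x) = max b' (f x) → s.fold max b f ≤ s.fold max b' f := by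
    intro b b' hb
    refine (fold_max_le _).2 ⟨?_, fun y hy => (le_fold_max _).2 (Or.inr ⟨y, hy, le_rfl⟩)⟩
    calc b ≤ max b (f x) := le_max_left _ _
      _ = max b' (f x) := hb
      _ ≤ s.fold max b' f :=
        max_le ((le_fold_max _).2 (Or.inl le_rfl)) ((le_fold_max _).2 (Or.inr ⟨x, hx, le_rfl⟩))
  exact le_antisymm (key b b' hb) (key b' b hb.symm)

theorem fold_max_max_zero_eq_sub_one {α : Type*} {s : Finset α} {f : α → ℤ} {x : α}
    (hx : x ∈ s) (hfx : 1 ≤ f x) (a : ℤ) :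
    s.fold max (max a 0) f = s.fold max (max (a - 1) 0) (fun y => f y - 1) + 1 := by
  rw [← fold_max_add_right]
  simp only [sub_add_cancel]
  exact fold_max_congr_init hx (by omega)

theorem sum_update_pred_add_one {α : Type*} [DecidableEq α] {s : Finset α} {f : α → ℕ}
    {i : α} (hi : i ∈ s) (hfi : 1 ≤ f i) :
    ∑ j ∈ s, Function.update f i (f i - 1) j + 1 = ∑ j ∈ s, f j := by
  rw [sum_update_of_mem hi, sum_eq_add_sum_sdiff_singleton_of_mem hi f]
  omega

end Finset

open Finset

def codeTau {n : ℕ} (h l : Fin n → ℕ) (k : Fin n) : ℤ :=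
  (∑ i ∈ univ.filter (fun i => k ≤ i), (l i : ℤ)) - h k

theorem kappaCode_eq (s t n : ℕ) (h l : Fin n → ℕ) :
    kappaCode s t n h l = s + univ.fold max (max ((t : ℤ) + 1 - s) 0) (codeTau h l) :=
  rfl

theorem last_mem_filter_le {n : ℕ} (k : Fin (n + 1)) :
    Fin.last n ∈ univ.filter (fun i => k ≤ i) := by
  simp [Fin.le_last]

theorem codeTau_update_last {n : ℕ} (h l : Fin (n + 1) → ℕ) (hl : 1 ≤ l (Fin.last n))
    (k : Fin (n + 1)) :
    codeTau h (Function.update l (Fin.last n) (l (Fin.last n) - 1)) k = codeTau h l k - 1 := by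
  have hsum := congrArg (Nat.cast : ℕ → ℤ) (sum_update_pred_add_one (last_mem_filter_le k) hl)
  push_cast at hsum
  unfold codeTau
  linarith

theorem one_le_codeTau_last {n : ℕ} (h l : Fin (n + 1) → ℕ) (hh : h (Fin.last n) = 0)
    (hl : 1 ≤ l (Fin.last n)) : 1 ≤ codeTau h l (Fin.last n) := by
  have hle : (l (Fin.last n) : ℤ) ≤ ∑ i ∈ univ.filter (fun i => Fin.last n ≤ i), (l i : ℤ) :=
    single_le_sum (fun i _ => Int.natCast_nonneg (l i)) (last_mem_filter_le _)
  unfold codeTau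
  omega

theorem kappa_lastZero_step_general (s t n : ℕ) (hn : 0 < n) (h l : Fin n → ℕ)
    (hl : ∀ k, 1 ≤ l k)
    (hsum : ∑ k, l k = t) (hlast : h ⟨n - 1, Nat.sub_lt hn Nat.one_pos⟩ = 0) :
    kappaCode s t n h l =
      kappaCode s (t - 1) n h
        (Function.update l ⟨n - 1, Nat.sub_lt hn Nat.one_pos⟩
          (l ⟨n - 1, Nat.sub_lt hn Nat.one_pos⟩ - 1)) + 1 := by
  obtain ⟨n, rfl⟩ := Nat.exists_eq_add_one_of_ne_zero hn.ne'
  change kappaCode s t (n + 1) h l =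
    kappaCode s (t - 1) (n + 1) h (Function.update l (Fin.last n) (l (Fin.last n) - 1)) + 1
  have ht : 1 ≤ t := hsum ▸ (hl _).trans (single_le_sum (fun _ _ => Nat.zero_le _) (mem_univ 0))
  have hτ : codeTau h (Function.update l (Fin.last n) (l (Fin.last n) - 1)) =
      fun k => codeTau h l k - 1 :=
    funext (codeTau_update_last h l (hl _))
  have hbound : ((t - 1 : ℕ) : ℤ) + 1 - s = (t : ℤ) + 1 - s - 1 := by omega
  rw [kappaCode_eq, kappaCode_eq, hτ, hbound,
    fold_max_max_zero_eq_sub_one (mem_univ _) (one_le_codeTau_last h l hlast (hl _))]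
  ring

/-- If `P` has hook code `(h_1^{l_1},…,h_n^{l_n})` in a `t × s` box with `h_n = 0`, and `P̄`
has code `(h_1^{l_1},…,h_n^{l_n - 1})` in a `(t-1) × s` box (dropping the last column of the
code), then `κ(P) = κ(P̄) + 1`. -/
theorem kappa_lastZero_step (s t n : ℕ) (hn : 0 < n) (h l : Fin n → ℕ)
    (hh : StrictAnti h) (hhs : ∀ k, h k ≤ s) (hl : ∀ k, 1 ≤ l k)
    (hsum : ∑ k, l k = t) (hlast : h ⟨n - 1, Nat.sub_lt hn Nat.one_pos⟩ = 0) :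
    kappaCode s t n h l =
      kappaCode s (t - 1) n h
        (Function.update l ⟨n - 1, Nat.sub_lt hn Nat.one_pos⟩
          (l ⟨n - 1, Nat.sub_lt hn Nat.one_pos⟩ - 1)) + 1 :=
  kappa_lastZero_step_general s t n hn h l hl hsum hlast
end

section
/- For a monomial ideal E_P in k[x,y] associated to a partition P of diagonal lengths a single-block Hilbert function T = (1,...,d,t,0), with s = d+1-t and hook code Q(P) = (h_1^{l_1},...,h_n^{l_n}), the minimal number of generators b_1(E_P) equals s + t − n if h_1 < s and h_n > 0; equals s + t − n + 1 if exactly one of (h_1 = s), (h_n = 0) holds; and equals s + t − n + 2 if h_1 = s and h_n = 0. -/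
/-- Height of column `a` of the Ferrers diagram of a partition whose rows all have index
`≤ d` (rows are `b = 0, …, d`). -/
def colHeight (d : ℕ) (f : ℕ → ℕ) (a : ℕ) : ℕ :=
  ((Finset.range (d + 1)).filter fun b => a < f b).card

/-- Number of difference-one hooks whose hand is the last cell of row `b`: a hook with
corner `(a,b)` has arm length `f b - a` and leg length `colHeight d f a - b` (the foot is
the bottom cell of column `a`), and we require arm − leg = 1. -/
def hookCount (d : ℕ) (f : ℕ → ℕ) (b : ℕ) : ℕ :=
  ((Finset.range (f b)).filter fun a =>
    b < colHeight d f a ∧ ((f b : ℤ) - a) - ((colHeight d f a : ℤ) - b) = 1).card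

/-- The rows of `f` whose hand monomial has degree `d`, i.e. `(f b - 1) + b = d`. -/
def handsDeg (d : ℕ) (f : ℕ → ℕ) : Finset ℕ :=
  (Finset.range (d + 1)).filter fun b => f b + b = d + 1

/-- The set of values `h_1 > h_2 > ⋯ > h_n` of the (difference-one) hook code of `f`
attached to its degree-`d` hands. -/
def hookValues (d : ℕ) (f : ℕ → ℕ) : Finset ℕ :=
  (handsDeg d f).image (hookCount d f)

/-- The minimal number of generators of the monomial ideal `E_P` complementary to the
diagram of `f`: one generator for each distinct nonzero part size, plus one. -/
def b1 (d : ℕ) (f : ℕ → ℕ) : ℕ :=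
  (((Finset.range (d + 1)).filter fun b => 0 < f b).image f).card + 1


section Aux
variable {d t : ℕ} {f : ℕ → ℕ}

theorem step1 (ht : 0 < t) (htd : t ≤ d)
    (hdiag : ∀ i, diagLen f i = if i < d then i + 1 else if i = d then t else 0) :
    (∀ b, b ≤ d → d ≤ f b + b ∧ f b + b ≤ d + 1) ∧ (∀ b, d < b → f b = 0) ∧
      (handsDeg d f).card = t := by
  have hfull : ∀ i, i < d → ∀ b, b ≤ i → i + 1 ≤ f b + b := by
    intro i hi b hb
    have h := hdiag i
    rw [if_pos hi] at h
    have hsub := Finset.filter_subset (fun b => i + 1 - b ≤ f b) (Finset.range (i+1))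
    have : ((Finset.range (i + 1)).filter fun b => i + 1 - b ≤ f b) = Finset.range (i+1) := by
      apply Finset.eq_of_subset_of_card_le hsub
      show (Finset.range (i+1)).card ≤ diagLen f i
      rw [h, Finset.card_range]
    have hb' : b ∈ ((Finset.range (i + 1)).filter fun b => i + 1 - b ≤ f b) := by
      rw [this]; exact Finset.mem_range.mpr (Nat.lt_succ_of_le hb)
    have := (Finset.mem_filter.mp hb').2
    omega
  have hempty : ∀ i, d < i → ∀ b, b ≤ i → f b + b ≤ i := by
    intro i hi b hb
    have h := hdiag i
    rw [if_neg (by omega), if_neg (by omega)] at h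
    have := Finset.card_eq_zero.mp h
    by_contra hcon
    have : b ∈ ((Finset.range (i + 1)).filter fun b => i + 1 - b ≤ f b) := by
      refine Finset.mem_filter.mpr ⟨Finset.mem_range.mpr (by omega), by omega⟩
    simp_all
  refine ⟨fun b hb => ⟨?_, ?_⟩, fun b hb => ?_, ?_⟩
  · rcases Nat.lt_or_ge b d with h | h
    · have := hfull (d-1) (by omega) b (by omega); omega
    · omega
  · have := hempty (d+1) (by omega) b (by omega); omega
  · have := hempty b (by omega) b le_rfl; omega
  · have h := hdiag d
    rw [if_neg (by omega), if_pos rfl] at h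
    rw [← h]
    unfold handsDeg diagLen
    apply Finset.card_bij (fun b _ => b)
    · intro b hb
      simp only [Finset.mem_filter, Finset.mem_range] at hb ⊢
      exact ⟨hb.1, by omega⟩
    · intro a b _ _ h; exact h
    · intro b hb
      simp only [Finset.mem_filter, Finset.mem_range] at hb ⊢
      refine ⟨b, ⟨hb.1, ?_⟩, rfl⟩
      have := hempty (d+1) (by omega) b (by omega)
      omega

end Aux


/-- number of non-hands in `(b, d]`. -/
def NH (d : ℕ) (f : ℕ → ℕ) (b : ℕ) : ℕ :=
  ((Finset.Ioc b d).filter (fun c => c ∉ handsDeg d f)).card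

section Aux
variable {d t : ℕ} {f : ℕ → ℕ}

theorem mem_handsDeg (b : ℕ) : b ∈ handsDeg d f ↔ b ≤ d ∧ f b + b = d + 1 := by
  simp [handsDeg, Finset.mem_filter, Finset.mem_range, Nat.lt_succ_iff]

theorem colHeight_eq (hAB : ∀ b, b ≤ d → d ≤ f b + b ∧ f b + b ≤ d + 1)
    (a : ℕ) (ha : a ≤ d) :
    colHeight d f a = d - a + (if d - a ∈ handsDeg d f then 1 else 0) := by
  unfold colHeight
  by_cases hda : d - a ∈ handsDeg d f
  · rw [if_pos hda]
    have hda' := (mem_handsDeg _).mp hda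
    have hset : (Finset.range (d+1)).filter (fun b => a < f b) = Finset.range (d - a + 1) := by
      ext b
      simp only [Finset.mem_filter, Finset.mem_range]
      constructor
      · rintro ⟨hb, hfb⟩
        have := hAB b (by omega)
        omega
      · intro hb
        have := hAB b (by omega)
        refine ⟨by omega, ?_⟩
        rcases Nat.lt_or_ge b (d - a) with h | h
        · omega
        · have hbe : b = d - a := by omega
          subst hbe; omega
    rw [hset, Finset.card_range]
  · rw [if_neg hda]
    have hda' : ¬(f (d-a) + (d-a) = d + 1) := fun h => hda ((mem_handsDeg _).mpr ⟨by omega, h⟩)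
    have hABda := hAB (d-a) (by omega)
    have hset : (Finset.range (d+1)).filter (fun b => a < f b) = Finset.range (d - a) := by
      ext b
      simp only [Finset.mem_filter, Finset.mem_range]
      constructor
      · rintro ⟨hb, hfb⟩
        have := hAB b (by omega)
        rcases Nat.lt_or_ge b (d-a) with h | h
        · omega
        · exfalso
          have hbe : b = d - a := by omega
          subst hbe; omega
      · intro hb
        have := hAB b (by omega)
        omega
    rw [hset, Finset.card_range]; omega

theorem hookCount_eq (hAB : ∀ b, b ≤ d → d ≤ f b + b ∧ f b + b ≤ d + 1)
    (b : ℕ) (hb : b ∈ handsDeg d f) :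
    hookCount d f b = NH d f b := by
  obtain ⟨hbd, hfb⟩ := (mem_handsDeg b).mp hb
  unfold hookCount
  have hset : (Finset.range (f b)).filter (fun a =>
      b < colHeight d f a ∧ ((f b : ℤ) - a) - ((colHeight d f a : ℤ) - b) = 1)
      = (Finset.range (d - b)).filter (fun a => d - a ∉ handsDeg d f) := by
    ext a
    simp only [Finset.mem_filter, Finset.mem_range]
    constructor
    · rintro ⟨ha, h1, h2⟩
      have had : a ≤ d := by omega
      have hco := colHeight_eq hAB a had
      by_cases hda : d - a ∈ handsDeg d f
      · rw [if_pos hda] at hco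
        rw [hco] at h2
        exfalso; omega
      · rw [if_neg hda] at hco
        rw [hco] at h1
        exact ⟨by omega, hda⟩
    · rintro ⟨ha, hda⟩
      have had : a ≤ d := by omega
      have hco := colHeight_eq hAB a had
      rw [if_neg hda] at hco
      refine ⟨by omega, by rw [hco]; omega, by rw [hco]; push_cast; omega⟩
  rw [hset]
  unfold NH
  apply Finset.card_bij' (fun a _ => d - a) (fun c _ => d - c)
  · intro a ha
    simp only [Finset.mem_filter, Finset.mem_range] at ha
    simp only [Finset.mem_filter, Finset.mem_Ioc]
    exact ⟨⟨by omega, by omega⟩, ha.2⟩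
  · intro c hc
    simp only [Finset.mem_filter, Finset.mem_Ioc] at hc
    simp only [Finset.mem_filter, Finset.mem_range]
    have : d - (d - c) = c := by omega
    rw [this]
    exact ⟨by omega, hc.2⟩
  · intro a ha
    simp only [Finset.mem_filter, Finset.mem_range] at ha
    omega
  · intro c hc
    simp only [Finset.mem_filter, Finset.mem_Ioc] at hc
    omega

theorem NH_antitone {b b' : ℕ} (h : b ≤ b') : NH d f b' ≤ NH d f b :=
  Finset.card_le_card (Finset.filter_subset_filter _ (Finset.Ioc_subset_Ioc_left h))

theorem nonhands_card (hcard : (handsDeg d f).card = t) (htd1 : t ≤ d + 1) :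
    ((Finset.range (d+1)).filter (fun c => c ∉ handsDeg d f)).card = d + 1 - t := by
  have h1 := Finset.card_filter_add_card_filter_not
    (s := Finset.range (d+1)) (p := fun c => c ∈ handsDeg d f)
  have h2 : (Finset.range (d+1)).filter (fun c => c ∈ handsDeg d f) = handsDeg d f := by
    ext c
    simp only [Finset.mem_filter, Finset.mem_range, mem_handsDeg]
    omega
  rw [h2, hcard, Finset.card_range] at h1
  omega

theorem NH_le (hcard : (handsDeg d f).card = t) (htd1 : t ≤ d + 1) (b : ℕ) :
    NH d f b ≤ d + 1 - t := by
  rw [← nonhands_card hcard htd1]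
  exact Finset.card_le_card (Finset.filter_subset_filter _
    (fun c hc => Finset.mem_range.mpr (by simp only [Finset.mem_Ioc] at hc; omega)))

theorem NH_lt (hcard : (handsDeg d f).card = t) (htd1 : t ≤ d + 1)
    (h0 : 0 ∉ handsDeg d f) (b : ℕ) : NH d f b < d + 1 - t := by
  rw [← nonhands_card hcard htd1]
  apply Finset.card_lt_card
  rw [Finset.ssubset_iff_of_subset (Finset.filter_subset_filter _
    (fun c hc => Finset.mem_range.mpr (by simp only [Finset.mem_Ioc] at hc; omega)))]
  exact ⟨0, Finset.mem_filter.mpr ⟨Finset.mem_range.mpr (by omega), h0⟩,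
    fun h => by simp [Finset.mem_filter, Finset.mem_Ioc] at h⟩

theorem NH_full (hcard : (handsDeg d f).card = t) (htd1 : t ≤ d + 1)
    (h0 : 0 ∈ handsDeg d f) : NH d f 0 = d + 1 - t := by
  rw [← nonhands_card hcard htd1]
  unfold NH
  congr 1
  ext c
  simp only [Finset.mem_filter, Finset.mem_Ioc, Finset.mem_range, Nat.lt_succ_iff]
  constructor
  · rintro ⟨⟨_, h⟩, h2⟩; exact ⟨h, h2⟩
  · rintro ⟨h, h2⟩
    refine ⟨⟨?_, h⟩, h2⟩
    rcases Nat.eq_zero_or_pos c with rfl | hc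
    · exact absurd h0 h2
    · exact hc

theorem NH_d (hd : d ∈ handsDeg d f) : NH d f d = 0 := by
  simp [NH]

theorem NH_pos (hd : d ∉ handsDeg d f) (b : ℕ) (hb : b < d) : 0 < NH d f b :=
  Finset.card_pos.mpr ⟨d, Finset.mem_filter.mpr ⟨Finset.mem_Ioc.mpr ⟨hb, le_rfl⟩, hd⟩⟩

theorem NH_strict {b b' : ℕ} (hnb : b + 1 ∉ handsDeg d f) (hbb : b + 1 ≤ b') (hb' : b' ≤ d) :
    NH d f b' < NH d f b := by
  apply Finset.card_lt_card
  rw [Finset.ssubset_iff_of_subset (Finset.filter_subset_filter _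
    (Finset.Ioc_subset_Ioc_left (by omega)))]
  refine ⟨b + 1, Finset.mem_filter.mpr ⟨Finset.mem_Ioc.mpr ⟨by omega, by omega⟩, hnb⟩, ?_⟩
  simp only [Finset.mem_filter, Finset.mem_Ioc]
  omega

theorem NH_succ {b : ℕ} (hb : b + 1 ∈ handsDeg d f) : NH d f (b + 1) = NH d f b := by
  unfold NH
  congr 1
  ext c
  simp only [Finset.mem_filter, Finset.mem_Ioc]
  constructor
  · rintro ⟨⟨h1, h2⟩, h3⟩; exact ⟨⟨by omega, h2⟩, h3⟩
  · rintro ⟨⟨h1, h2⟩, h3⟩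
    refine ⟨⟨?_, h2⟩, h3⟩
    rcases Nat.lt_or_ge b (c - 1) with h | h
    · omega
    · have : c = b + 1 := by omega
      subst this
      exact absurd hb h3

theorem block_end (b : ℕ) (hb : b ∈ handsDeg d f) :
    ∃ e ∈ handsDeg d f, e + 1 ∉ handsDeg d f ∧ NH d f e = NH d f b := by
  obtain ⟨hbd, -⟩ := (mem_handsDeg b).mp hb
  have : ∀ k b, b ∈ handsDeg d f → d - b ≤ k →
      ∃ e ∈ handsDeg d f, e + 1 ∉ handsDeg d f ∧ NH d f e = NH d f b := by
    intro k
    induction k with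
    | zero =>
      intro b hb hk
      obtain ⟨hbd, -⟩ := (mem_handsDeg b).mp hb
      have hbd' : b = d := by omega
      refine ⟨b, hb, ?_, rfl⟩
      intro h
      obtain ⟨h1, -⟩ := (mem_handsDeg _).mp h
      omega
    | succ k ih =>
      intro b hb hk
      by_cases hnext : b + 1 ∈ handsDeg d f
      · obtain ⟨h1, -⟩ := (mem_handsDeg _).mp hnext
        obtain ⟨e, he, hne, heq⟩ := ih (b+1) hnext (by omega)
        exact ⟨e, he, hne, by rw [heq, NH_succ hnext]⟩
      · exact ⟨b, hb, hnext, rfl⟩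
  exact this (d - b) b hb le_rfl

theorem ends_card :
    ((handsDeg d f).image (NH d f)).card
      = ((handsDeg d f).filter (fun b => b + 1 ∉ handsDeg d f)).card := by
  symm
  apply Finset.card_bij (fun b _ => NH d f b)
  · intro b hb
    exact Finset.mem_image_of_mem _ (Finset.mem_filter.mp hb).1
  · intro b1 hb1 b2 hb2 heq
    simp only [Finset.mem_filter] at hb1 hb2
    by_contra hne
    rcases Nat.lt_or_ge b1 b2 with h | h
    · have := NH_strict hb1.2 (by omega) ((mem_handsDeg b2).mp hb2.1).1
      omega
    · have := NH_strict hb2.2 (by omega) ((mem_handsDeg b1).mp hb1.1).1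
      omega
  · intro v hv
    obtain ⟨b, hb, rfl⟩ := Finset.mem_image.mp hv
    obtain ⟨e, he, hne, heq⟩ := block_end b hb
    exact ⟨e, Finset.mem_filter.mpr ⟨he, hne⟩, heq⟩

end Aux


section Aux2
variable {d t : ℕ} {f : ℕ → ℕ}

theorem b1_count (hAB : ∀ b, b ≤ d → d ≤ f b + b ∧ f b + b ≤ d + 1) :
    b1 d f + ((handsDeg d f).filter (fun b => b + 1 ∉ handsDeg d f)).card
      + (if 0 ∈ handsDeg d f then 0 else 1)
      = d + 2 + (if d ∈ handsDeg d f then 1 else 0) := by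
  classical
  have hfH : ∀ b, b ∈ handsDeg d f → f b = d + 1 - b := by
    intro b hb; obtain ⟨h1, h2⟩ := (mem_handsDeg b).mp hb; omega
  have hfnH : ∀ b, b ≤ d → b ∉ handsDeg d f → f b = d - b := by
    intro b hb hnb
    have h1 := hAB b hb
    have h2 : ¬(f b + b = d + 1) := fun h => hnb ((mem_handsDeg b).mpr ⟨hb, h⟩)
    omega
  set H := handsDeg d f with hH
  set W := (Finset.range (d+1)).filter (fun c => c ∈ H ∨ (1 ≤ c ∧ c - 1 ∉ H)) with hWdef
  set Wc := (Finset.range (d+1)).filter (fun c => ¬(c ∈ H ∨ (1 ≤ c ∧ c - 1 ∉ H))) with hWcdef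
  set E' := H.filter (fun b => b + 1 ∉ H ∧ b + 1 ≤ d) with hE'def
  -- b1 = W.card + 1
  have e4 : (((Finset.range (d+1)).filter fun b => 0 < f b).image f).card = W.card := by
    have himg : ((Finset.range (d+1)).filter fun b => 0 < f b).image f
        = W.image (fun c => d + 1 - c) := by
      rw [hWdef]
      ext v
      simp only [Finset.mem_image, Finset.mem_filter, Finset.mem_range, Nat.lt_succ_iff]
      constructor
      · rintro ⟨b, ⟨hb, hfb⟩, rfl⟩
        by_cases hbH : b ∈ H
        · exact ⟨b, ⟨hb, Or.inl hbH⟩, by rw [hfH b hbH]⟩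
        · have hv := hfnH b hb hbH
          exact ⟨b + 1, ⟨by omega, Or.inr ⟨by omega, by simpa using hbH⟩⟩, by omega⟩
      · rintro ⟨c, ⟨hc, hcond⟩, rfl⟩
        rcases hcond with hcH | ⟨hc1, hcnH⟩
        · exact ⟨c, ⟨hc, by rw [hfH c hcH]; omega⟩, hfH c hcH⟩
        · refine ⟨c - 1, ⟨by omega, ?_⟩, ?_⟩ <;> rw [hfnH (c-1) (by omega) hcnH] <;> omega
    rw [himg]
    apply Finset.card_image_of_injOn
    intro a ha b hb hab
    have hab' : d + 1 - a = d + 1 - b := hab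
    rw [hWdef] at ha hb
    simp only [Finset.coe_filter, Set.mem_setOf_eq, Finset.mem_range] at ha hb
    omega
  have e1 : W.card + Wc.card = d + 1 := by
    have h := Finset.card_filter_add_card_filter_not (s := Finset.range (d+1))
      (p := fun c => c ∈ H ∨ (1 ≤ c ∧ c - 1 ∉ H))
    rw [Finset.card_range] at h
    exact h
  have e2 : Wc.card = E'.card + (if 0 ∈ H then 0 else 1) := by
    have hsplit := Finset.card_filter_add_card_filter_not (s := Wc)
      (p := fun c => c ≠ 0)
    have hpos : Wc.filter (fun c => c ≠ 0) = E'.image (fun b => b + 1) := by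
      rw [hWcdef, hE'def]
      ext c
      simp only [Finset.mem_filter, Finset.mem_range, Finset.mem_image, Nat.lt_succ_iff,
        not_or, not_and, not_not]
      constructor
      · rintro ⟨⟨hc, hcnH, himp⟩, hc0⟩
        have hcc : c - 1 + 1 = c := by omega
        refine ⟨c - 1, ⟨himp (by omega), ?_, by omega⟩, hcc⟩
        rw [hcc]
        exact hcnH
      · rintro ⟨b, ⟨hbH, hbnH, hbd⟩, rfl⟩
        have : b + 1 - 1 = b := by omega
        exact ⟨⟨by omega, by simpa [this] using hbnH, fun _ => by simpa [this] using hbH⟩, by omega⟩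
    have hzero : (Wc.filter (fun c => ¬ c ≠ 0)).card = (if 0 ∈ H then 0 else 1) := by
      by_cases h0 : 0 ∈ H
      · rw [if_pos h0, Finset.card_eq_zero, Finset.eq_empty_iff_forall_notMem]
        intro c hc
        rw [Finset.mem_filter] at hc
        obtain ⟨hcWc, hc0⟩ := hc
        push_neg at hc0
        subst hc0
        rw [hWcdef, Finset.mem_filter] at hcWc
        exact hcWc.2 (Or.inl h0)
      · rw [if_neg h0, Finset.card_eq_one]
        refine ⟨0, ?_⟩
        ext c
        rw [Finset.mem_filter, Finset.mem_singleton]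
        constructor
        · rintro ⟨_, hc0⟩
          push_neg at hc0
          exact hc0
        · rintro rfl
          refine ⟨?_, by simp⟩
          rw [hWcdef, Finset.mem_filter]
          refine ⟨Finset.mem_range.mpr (by omega), ?_⟩
          rintro (h | ⟨h1, _⟩)
          · exact h0 h
          · omega
    have himgcard : (E'.image (fun b => b + 1)).card = E'.card :=
      Finset.card_image_of_injective _ (fun a b h => by omega)
    rw [hpos, himgcard, hzero] at hsplit
    omega
  have e3 : (H.filter (fun b => b + 1 ∉ H)).card = E'.card + (if d ∈ H then 1 else 0) := by
    have hsplit := Finset.card_filter_add_card_filter_not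
      (s := H.filter (fun b => b + 1 ∉ H)) (p := fun b => b + 1 ≤ d)
    have hE : (H.filter (fun b => b + 1 ∉ H)).filter (fun b => b + 1 ≤ d) = E' := by
      rw [hE'def, Finset.filter_filter]
    have hD : (((H.filter (fun b => b + 1 ∉ H)).filter (fun b => ¬ b + 1 ≤ d))).card
        = (if d ∈ H then 1 else 0) := by
      by_cases hd : d ∈ H
      · rw [if_pos hd, Finset.card_eq_one]
        refine ⟨d, ?_⟩
        ext b
        simp only [Finset.mem_filter, Finset.mem_singleton]
        constructor
        · rintro ⟨⟨hbH, _⟩, hbd⟩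
          have := ((mem_handsDeg b).mp hbH).1
          omega
        · intro hb
          rw [hb]
          refine ⟨⟨hd, fun h => ?_⟩, by omega⟩
          have := ((mem_handsDeg (d+1)).mp h).1
          omega
      · rw [if_neg hd, Finset.card_eq_zero]
        ext b
        simp only [Finset.mem_filter, Finset.notMem_empty, iff_false]
        rintro ⟨⟨hbH, _⟩, hbd⟩
        have := ((mem_handsDeg b).mp hbH).1
        have : b = d := by omega
        subst this
        exact hd hbH
    rw [hE, hD] at hsplit
    omega
  unfold b1
  rw [e4, e3]
  omega

end Aux2

/-- Lemma 3.9: for a partition `P` of single-block diagonal lengths `T = (1,…,d,t,0)`,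
`s = d+1-t`, with hook code `(h_1^{l_1},…,h_n^{l_n})`, the minimal number of generators
`b_1(E_P)` equals `s+t-n` if `h_1 < s` and `h_n > 0`; equals `s+t-n+1` if exactly one of
`h_1 = s`, `h_n = 0` holds; and equals `s+t-n+2` if `h_1 = s` and `h_n = 0`. -/
theorem b1_formula (d t s : ℕ) (ht : 0 < t) (htd : t ≤ d) (hs : s = d + 1 - t)
    (f : ℕ → ℕ) (hf : Antitone f)
    (hdiag : ∀ i, diagLen f i = if i < d then i + 1 else if i = d then t else 0) :
    (sSup (↑(hookValues d f) : Set ℕ) < s ∧ 0 < sInf (↑(hookValues d f) : Set ℕ) →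
      b1 d f = s + t - (hookValues d f).card) ∧
    ((sSup (↑(hookValues d f) : Set ℕ) = s ∧ 0 < sInf (↑(hookValues d f) : Set ℕ)) ∨
        (sSup (↑(hookValues d f) : Set ℕ) < s ∧ sInf (↑(hookValues d f) : Set ℕ) = 0) →
      b1 d f = s + t - (hookValues d f).card + 1) ∧
    (sSup (↑(hookValues d f) : Set ℕ) = s ∧ sInf (↑(hookValues d f) : Set ℕ) = 0 →
      b1 d f = s + t - (hookValues d f).card + 2) := by
  classical
  obtain ⟨hAB, hC, hcard⟩ := step1 ht htd hdiag
  have htd1 : t ≤ d + 1 := by omega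
  have hne : (handsDeg d f).Nonempty := Finset.card_pos.mp (by rw [hcard]; exact ht)
  have himg : hookValues d f = (handsDeg d f).image (NH d f) :=
    Finset.image_congr (fun b hb => hookCount_eq hAB b hb)
  have hVne : (hookValues d f).Nonempty := by rw [himg]; exact hne.image _
  have hsup : sSup (↑(hookValues d f) : Set ℕ) = NH d f ((handsDeg d f).min' hne) := by
    rw [hVne.csSup_eq_max']
    apply le_antisymm
    · apply Finset.max'_le
      intro v hv
      rw [himg] at hv
      obtain ⟨b, hb, rfl⟩ := Finset.mem_image.mp hv
      exact NH_antitone (Finset.min'_le _ _ hb)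
    · exact Finset.le_max' _ _ (himg ▸ Finset.mem_image_of_mem _ (Finset.min'_mem _ hne))
  have hinf : sInf (↑(hookValues d f) : Set ℕ) = NH d f ((handsDeg d f).max' hne) := by
    rw [hVne.csInf_eq_min']
    apply le_antisymm
    · exact Finset.min'_le _ _ (himg ▸ Finset.mem_image_of_mem _ (Finset.max'_mem _ hne))
    · apply Finset.le_min'
      intro v hv
      rw [himg] at hv
      obtain ⟨b, hb, rfl⟩ := Finset.mem_image.mp hv
      exact NH_antitone (Finset.le_max' _ _ hb)
  have hn_le : (hookValues d f).card ≤ t := by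
    rw [himg, ← hcard]; exact Finset.card_image_le
  have hb1 := b1_count hAB
  have hncard : (hookValues d f).card
      = ((handsDeg d f).filter (fun b => b + 1 ∉ handsDeg d f)).card := by
    rw [himg]; exact ends_card
  rw [← hncard] at hb1
  have hmax_le : (handsDeg d f).max' hne ≤ d :=
    Finset.max'_le _ _ _ (fun y hy => ((mem_handsDeg y).mp hy).1)
  refine ⟨?_, ?_, ?_⟩
  · rintro ⟨h1lt, h2pos⟩
    have h0 : 0 ∉ handsDeg d f := by
      intro h0
      have hmin : (handsDeg d f).min' hne = 0 := Nat.le_zero.mp (Finset.min'_le _ _ h0)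
      rw [hsup, hmin, NH_full hcard htd1 h0] at h1lt
      omega
    have hd : d ∉ handsDeg d f := by
      intro hd
      have hmax : (handsDeg d f).max' hne = d := le_antisymm hmax_le (Finset.le_max' _ _ hd)
      rw [hinf, hmax, NH_d hd] at h2pos
      exact lt_irrefl _ h2pos
    rw [if_neg h0, if_neg hd] at hb1
    omega
  · rintro (⟨h1eq, h2pos⟩ | ⟨h1lt, h2eq⟩)
    · have h0 : 0 ∈ handsDeg d f := by
        by_contra h0
        have := NH_lt hcard htd1 h0 ((handsDeg d f).min' hne)
        rw [← hsup] at this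
        omega
      have hd : d ∉ handsDeg d f := by
        intro hd
        have hmax : (handsDeg d f).max' hne = d := le_antisymm hmax_le (Finset.le_max' _ _ hd)
        rw [hinf, hmax, NH_d hd] at h2pos
        exact lt_irrefl _ h2pos
      rw [if_pos h0, if_neg hd] at hb1
      omega
    · have h0 : 0 ∉ handsDeg d f := by
        intro h0
        have hmin : (handsDeg d f).min' hne = 0 := Nat.le_zero.mp (Finset.min'_le _ _ h0)
        rw [hsup, hmin, NH_full hcard htd1 h0] at h1lt
        omega
      have hd : d ∈ handsDeg d f := by
        by_contra hd
        have hmaxlt : (handsDeg d f).max' hne < d :=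
          lt_of_le_of_ne hmax_le (fun h => hd ((congrArg (· ∈ handsDeg d f) h).mp (Finset.max'_mem _ hne)))
        have := NH_pos hd _ hmaxlt
        rw [← hinf] at this
        omega
      rw [if_neg h0, if_pos hd] at hb1
      omega
  · rintro ⟨h1eq, h2eq⟩
    have h0 : 0 ∈ handsDeg d f := by
      by_contra h0
      have := NH_lt hcard htd1 h0 ((handsDeg d f).min' hne)
      rw [← hsup] at this
      omega
    have hd : d ∈ handsDeg d f := by
      by_contra hd
      have hmaxlt : (handsDeg d f).max' hne < d :=
        lt_of_le_of_ne hmax_le (fun h => hd ((congrArg (· ∈ handsDeg d f) h).mp (Finset.max'_mem _ hne)))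
      have := NH_pos hd _ hmaxlt
      rw [← hinf] at this
      omega
    rw [if_pos h0, if_pos hd] at hb1
    omega
end

section
/- For each degree i, with i-th hook code block (h_{i,1}^{l_{i,1}},...,h_{i,n_i}^{l_{i,n_i}}) in the box δ_{i+1} × (1+δ_i), letting τ_{i,k} = Σ_{j=k}^{n_i} l_{i,j} − h_{i,k} and θ_{i,k} = g_{i,k} − r_{i,k} where g_{i,k} = Σ_{j=k}^{n_i} l_{i,j} − (n_i+1−k) + max{1−h_{i,n_i},0} + max{h_{i,k}−δ_i,0} and r_{i,k} = h_{i,k} − (n_i+1−k) + max{1−h_{i,n_i},0}, one has max{0, θ_{i,1},...,θ_{i,n_i}} = max{δ_{i+1}−δ_i, 0, τ_{i,1},...,τ_{i,n_i}}. -/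
/-! Write `S_k = Σ_{j ≥ k} l_j`, so that `τ_k = S_k - h_k` and `θ_k = τ_k + max{h_k - δ_i, 0}`.
Hence `τ_k ≤ θ_k`, and `θ_k ≠ τ_k` only when `h_k = δ_i + 1`, where `θ_k = S_k - δ_i ≤ δ_{i+1} - δ_i`.
Conversely `δ_{i+1} - δ_i = S_1 - δ_i ≤ θ_1`, so both maxima bound each other. -/

open Finset

def tailSum {n : ℕ} (l : Fin n → ℕ) (k : Fin n) : ℤ :=
  ∑ j ∈ univ.filter (fun j => k ≤ j), (l j : ℤ)

lemma tailSum_le_sum {n : ℕ} (l : Fin n → ℕ) (k : Fin n) : tailSum l k ≤ ∑ j, (l j : ℤ) :=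
  sum_le_sum_of_subset_of_nonneg (filter_subset _ _) fun j _ _ => Int.natCast_nonneg (l j)

lemma tailSum_zero {n : ℕ} (hn : 0 < n) (l : Fin n → ℕ) :
    tailSum l ⟨0, hn⟩ = ∑ j, (l j : ℤ) := by
  rw [tailSum, filter_true_of_mem fun (j : Fin n) _ => Fin.le_iff_val_le_val.2 (Nat.zero_le j)]

lemma sub_add_max_sub_le_max {S D h δ : ℤ} (hS : S ≤ D) (hh : h ≤ δ + 1) :
    S - h + max (h - δ) 0 ≤ max (D - δ) (S - h) := by
  omega

theorem fold_max_sub_add_max_eq {ι : Type*} {s : Finset ι} {S h : ι → ℤ} {D δ : ℤ} {k₀ : ι}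
    (hk₀ : k₀ ∈ s) (hS₀ : S k₀ = D) (hS : ∀ k ∈ s, S k ≤ D) (hh : ∀ k ∈ s, h k ≤ δ + 1) :
    s.fold max 0 (fun k => S k - h k + max (h k - δ) 0) =
      s.fold max (max (D - δ) 0) (fun k => S k - h k) := by
  apply le_antisymm
  · refine (fold_max_le _).2 ⟨(le_fold_max _).2 (Or.inl (le_max_right _ _)), fun k hk => ?_⟩
    rcases le_max_iff.1 (sub_add_max_sub_le_max (hS k hk) (hh k hk)) with hle | hle
    · exact (le_fold_max _).2 (Or.inl (le_max_of_le_left hle))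
    · exact (le_fold_max _).2 (Or.inr ⟨k, hk, hle⟩)
  · have hτθ : ∀ k, S k - h k ≤ S k - h k + max (h k - δ) 0 :=
      fun k => le_add_of_nonneg_right (le_max_right _ _)
    have hD : D - δ ≤ S k₀ - h k₀ + max (h k₀ - δ) 0 := by
      rw [hS₀]; linarith [le_max_left (h k₀ - δ) 0]
    refine (fold_max_le _).2 ⟨max_le ?_ ((le_fold_max _).2 (Or.inl le_rfl)), fun k hk => ?_⟩
    · exact (le_fold_max _).2 (Or.inr ⟨k₀, hk₀, hD⟩)
    · exact (le_fold_max _).2 (Or.inr ⟨k, hk, hτθ k⟩)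

theorem max_theta_eq_max_tau_general (δi δi1 n : ℕ) (hn : 0 < n) (h l : Fin n → ℕ)
    (hhb : ∀ x, h x ≤ δi + 1)
    (hsum : ∑ x, l x = δi1) :
    Finset.fold max (0 : ℤ)
      (fun x =>
        (((∑ i ∈ Finset.univ.filter (fun i => x ≤ i), (l i : ℤ)) - ((n : ℤ) - x) +
            max (1 - (h ⟨n - 1, Nat.sub_lt hn Nat.one_pos⟩ : ℤ)) 0 +
            max ((h x : ℤ) - δi) 0) -
          ((h x : ℤ) - ((n : ℤ) - x) +
            max (1 - (h ⟨n - 1, Nat.sub_lt hn Nat.one_pos⟩ : ℤ)) 0)))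
      Finset.univ =
    Finset.fold max (max ((δi1 : ℤ) - δi) 0)
      (fun x => (∑ i ∈ Finset.univ.filter (fun i => x ≤ i), (l i : ℤ)) - h x)
      Finset.univ := by
  have hsum' : ∑ j, (l j : ℤ) = δi1 := by exact_mod_cast hsum
  rw [fold_congr (g := fun k => tailSum l k - h k + max ((h k : ℤ) - δi) 0)
    fun k _ => by rw [tailSum]; ring]
  exact fold_max_sub_add_max_eq (S := tailSum l) (mem_univ ⟨0, hn⟩)
    (hsum' ▸ tailSum_zero hn l) (fun k _ => hsum' ▸ tailSum_le_sum l k)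
    (fun k _ => by exact_mod_cast hhb k)

/-- For the `i`-th hook code block `(h_1^{l_1},…,h_n^{l_n})` in the box
`δ_{i+1} × (1+δ_i)` (so `δ_i + 1 ≥ h_1 > ⋯ > h_n ≥ 0`, `l_k ≥ 1`, `Σ l_k = δ_{i+1}`), with
`τ_k = Σ_{j=k}^{n} l_j - h_k`,
`g_k = Σ_{j=k}^{n} l_j - (n+1-k) + max{1-h_n,0} + max{h_k-δ_i,0}`,
`r_k = h_k - (n+1-k) + max{1-h_n,0}`, and `θ_k = g_k - r_k`:
`max{0, θ_1, …, θ_n} = max{δ_{i+1}-δ_i, 0, τ_1, …, τ_n}`. -/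
theorem max_theta_eq_max_tau (δi δi1 n : ℕ) (hn : 0 < n) (h l : Fin n → ℕ)
    (hh : StrictAnti h) (hhb : ∀ x, h x ≤ δi + 1) (hl : ∀ x, 1 ≤ l x)
    (hsum : ∑ x, l x = δi1) :
    Finset.fold max (0 : ℤ)
      (fun x =>
        (((∑ i ∈ Finset.univ.filter (fun i => x ≤ i), (l i : ℤ)) - ((n : ℤ) - x) +
            max (1 - (h ⟨n - 1, Nat.sub_lt hn Nat.one_pos⟩ : ℤ)) 0 +
            max ((h x : ℤ) - δi) 0) -
          ((h x : ℤ) - ((n : ℤ) - x) +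
            max (1 - (h ⟨n - 1, Nat.sub_lt hn Nat.one_pos⟩ : ℤ)) 0)))
      Finset.univ =
    Finset.fold max (max ((δi1 : ℤ) - δi) 0)
      (fun x => (∑ i ∈ Finset.univ.filter (fun i => x ≤ i), (l i : ℤ)) - h x)
      Finset.univ :=
  max_theta_eq_max_tau_general δi δi1 n hn h l hhb hsum
end
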